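/- arXiv:1803.02651 — 13 statements merged into one kernel-verified Lean document; each statement's English description precedes it below -/
import Mathlib

section
/- (Measure disintegration) Let X and Y be nonempty standard Borel spaces, μ a probability measure on X, f : X → Y a measurable map, and ν = μ.map f the pushforward measure. Then there exists a Markov kernel g : Y ⇸ X such that ν.bind g = μ and, for ν-almost every y ∈ Y, (g y).map f is the Dirac measure at y. Moreover g is unique up to ν-almost-everywhere equality: any two Markov kernels with these properties agree at ν-almost every y. -/
/-!
A kernel `κ` disintegrates `μ` along `f` exactly when `ν ⊗ₘ κ` is the law of `x ↦ (f x, x)`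
under `μ`: both sides are then carried by the graph of `f`, on which `(y, x) = (f x, x)`.
So the disintegrations of `μ` along `f` are the versions of the regular conditional distribution
of the identity given `f`, which exists and is unique `ν`-a.e. because `X` is standard Borel.
-/

open MeasureTheory ProbabilityTheory

namespace MeasureTheory.Measure

variable {X Y : Type*} [MeasurableSpace X] [MeasurableSpace Y] {f : X → Y}

lemma map_eq_dirac_iff_ae_eq [MeasurableSingletonClass Y] {m : Measure X}
    [IsProbabilityMeasure m] (hf : Measurable f) {y : Y} :
    m.map f = dirac y ↔ ∀ᵐ x ∂m, f x = y := by
  refine ⟨fun h ↦ ?_, fun h ↦ ?_⟩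
  · have hy : ∀ᵐ z ∂m.map f, z = y := by
      rw [h, ae_dirac_eq]
      exact Filter.eventually_pure.2 rfl
    exact (ae_map_iff hf.aemeasurable (measurableSet_singleton y)).1 hy
  · rw [map_congr h, map_const, measure_univ, one_smul]

lemma compProd_map_eq_map_graph_of_ae {μ : Measure X} [SFinite μ] (κ : Kernel Y X)
    [IsSFiniteKernel κ] (hf : Measurable f) (hκ : ∀ᵐ y ∂μ.map f, ∀ᵐ x ∂κ y, f x = y) :
    μ.map f ⊗ₘ κ = (κ ∘ₘ μ.map f).map (fun x ↦ (f x, x)) := by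
  have hgraph : Measurable fun x ↦ (f x, x) := by fun_prop
  rw [compProd_eq_comp_prod, map_comp _ _ hgraph]
  refine comp_congr ?_
  filter_upwards [hκ] with y hy
  rw [Kernel.prod_apply, Kernel.id_apply, dirac_prod, Kernel.map_apply _ hgraph]
  refine map_congr ?_
  filter_upwards [hy] with x hx
  rw [hx]

theorem compProd_map_eq_map_graph_iff [MeasurableEq Y] {μ : Measure X} [SFinite μ]
    (κ : Kernel Y X) [IsMarkovKernel κ] (hf : Measurable f) :
    μ.map f ⊗ₘ κ = μ.map (fun x ↦ (f x, x)) ↔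
      κ ∘ₘ μ.map f = μ ∧ ∀ᵐ y ∂μ.map f, (κ y).map f = dirac y := by
  have hgraph : Measurable fun x ↦ (f x, x) := by fun_prop
  have hgraph_set : MeasurableSet {p : Y × X | f p.2 = p.1} :=
    measurableSet_eq_fun (by fun_prop) measurable_fst
  simp_rw [map_eq_dirac_iff_ae_eq hf]
  refine ⟨fun h ↦ ⟨?_, ?_⟩, fun ⟨hbind, hκ⟩ ↦ ?_⟩
  · rw [← snd_compProd, h, snd_map_prodMk hf, map_id']
  · have hae : ∀ᵐ p ∂(μ.map f ⊗ₘ κ), f p.2 = p.1 := by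
      rw [h]
      exact (ae_map_iff hgraph.aemeasurable hgraph_set).2 (ae_of_all _ fun _ ↦ rfl)
    exact (ae_compProd_iff hgraph_set).1 hae
  · rw [compProd_map_eq_map_graph_of_ae κ hf hκ, hbind]

end MeasureTheory.Measure

namespace ProbabilityTheory

theorem condDistrib_id_ae_eq_iff {X Y : Type*} [MeasurableSpace X] [StandardBorelSpace X]
    [Nonempty X] [MeasurableSpace Y] [MeasurableEq Y] {μ : Measure X} [IsFiniteMeasure μ]
    {f : X → Y} (hf : Measurable f) (κ : Kernel Y X) [IsMarkovKernel κ] :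
    condDistrib id f μ =ᵐ[μ.map f] κ ↔
      κ ∘ₘ μ.map f = μ ∧ ∀ᵐ y ∂μ.map f, (κ y).map f = Measure.dirac y :=
  (condDistrib_ae_eq_iff_measure_eq_compProd f aemeasurable_id κ).trans
    (eq_comm.trans (Measure.compProd_map_eq_map_graph_iff κ hf))

end ProbabilityTheory

theorem measure_disintegration_general
    {X Y : Type*}
    [MeasurableSpace X] [StandardBorelSpace X] [Nonempty X]
    [MeasurableSpace Y] [StandardBorelSpace Y]
    (μ : Measure X) [IsProbabilityMeasure μ] (f : X → Y) (hf : Measurable f) :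
    (∃ g : Y → Measure X, Measurable g ∧ (∀ y, IsProbabilityMeasure (g y)) ∧
        (μ.map f).bind g = μ ∧
        ∀ᵐ y ∂(μ.map f), (g y).map f = Measure.dirac y) ∧
    (∀ g₁ g₂ : Y → Measure X,
      Measurable g₁ → (∀ y, IsProbabilityMeasure (g₁ y)) →
        (μ.map f).bind g₁ = μ → (∀ᵐ y ∂(μ.map f), (g₁ y).map f = Measure.dirac y) →
      Measurable g₂ → (∀ y, IsProbabilityMeasure (g₂ y)) →
        (μ.map f).bind g₂ = μ → (∀ᵐ y ∂(μ.map f), (g₂ y).map f = Measure.dirac y) →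
      ∀ᵐ y ∂(μ.map f), g₁ y = g₂ y) := by
  have condDistrib_ae_eq {g : Y → Measure X} (hg : Measurable g)
      (hg_prob : ∀ y, IsProbabilityMeasure (g y)) (hbind : (μ.map f).bind g = μ)
      (hdirac : ∀ᵐ y ∂(μ.map f), (g y).map f = Measure.dirac y) :
      condDistrib id f μ =ᵐ[μ.map f] g :=
    have : IsMarkovKernel ⟨g, hg⟩ := ⟨hg_prob⟩
    (condDistrib_id_ae_eq_iff hf ⟨g, hg⟩).2 ⟨hbind, hdirac⟩
  refine ⟨⟨condDistrib id f μ, Kernel.measurable _, inferInstance,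
    (condDistrib_id_ae_eq_iff hf _).1 Filter.EventuallyEq.rfl⟩, ?_⟩
  intro g₁ g₂ hg₁ hg₁_prob hg₁_bind hg₁_dirac hg₂ hg₂_prob hg₂_bind hg₂_dirac
  exact (condDistrib_ae_eq hg₁ hg₁_prob hg₁_bind hg₁_dirac).symm.trans
    (condDistrib_ae_eq hg₂ hg₂_prob hg₂_bind hg₂_dirac)

/-- Measure disintegration theorem: a probability measure `μ` on a standard Borel
space disintegrates along any measurable map `f`, and the disintegration is unique
up to `ν`-a.e. equality, where `ν = μ.map f`. -/
theorem measure_disintegration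
    {X Y : Type*}
    [MeasurableSpace X] [StandardBorelSpace X] [Nonempty X]
    [MeasurableSpace Y] [StandardBorelSpace Y] [Nonempty Y]
    (μ : Measure X) [IsProbabilityMeasure μ] (f : X → Y) (hf : Measurable f) :
    (∃ g : Y → Measure X, Measurable g ∧ (∀ y, IsProbabilityMeasure (g y)) ∧
        (μ.map f).bind g = μ ∧
        ∀ᵐ y ∂(μ.map f), (g y).map f = Measure.dirac y) ∧
    (∀ g₁ g₂ : Y → Measure X,
      Measurable g₁ → (∀ y, IsProbabilityMeasure (g₁ y)) →
        (μ.map f).bind g₁ = μ → (∀ᵐ y ∂(μ.map f), (g₁ y).map f = Measure.dirac y) →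
      Measurable g₂ → (∀ y, IsProbabilityMeasure (g₂ y)) →
        (μ.map f).bind g₂ = μ → (∀ᵐ y ∂(μ.map f), (g₂ y).map f = Measure.dirac y) →
      ∀ᵐ y ∂(μ.map f), g₁ y = g₂ y) :=
  measure_disintegration_general μ f hf
end

section
/- (Disintegration computes conditional expectation) Let X and Y be nonempty standard Borel spaces, μ a probability measure on X, f : X → Y a measurable map, ν = μ.map f, and let g : Y ⇸ X be a disintegration of μ along f, i.e. a Markov kernel with ν.bind g = μ and (g y).map f = Dirac(y) for ν-almost every y. Then for every μ-integrable measurable function φ : X → ℝ, the function x ↦ ∫_X φ d(g (f x)) equals μ-almost everywhere the conditional expectation of φ with respect to the sub-σ-algebra σ(f) = f⁻¹(Borel(Y)) of X. -/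
/-!
Write `κ` for the kernel `g` and `ν = μ.map f`, so that `μ = κ ∘ₘ ν`. Since `(κ y).map f = δ_y`
for `ν`-a.e. `y`, the measure `κ y` gives `f ⁻¹' B` full mass if `y ∈ B` and mass zero
otherwise. Hence for every measurable `B ⊆ Y`
`∫_{f⁻¹B} φ dμ = ∫ (∫_{f⁻¹B} φ dκ y) dν(y) = ∫_B (∫ φ dκ y) dν(y) = ∫_{f⁻¹B} (∫ φ dκ (f x)) dμ(x)`,
and `x ↦ ∫ φ dκ (f x)` is `σ(f)`-measurable, which characterises the conditional expectation.
-/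

open MeasureTheory ProbabilityTheory

section

variable {X Y E : Type*} [MeasurableSpace X] [MeasurableSpace Y]
  [NormedAddCommGroup E] [NormedSpace ℝ E]

theorem setIntegral_preimage_of_map_eq_dirac {ρ : Measure X} {f : X → Y} (hf : Measurable f)
    {y : Y} (h : ρ.map f = Measure.dirac y) {B : Set Y} (hB : MeasurableSet B) (φ : X → E) :
    ∫ x in f ⁻¹' B, φ x ∂ρ = B.indicator (fun _ ↦ ∫ x, φ x ∂ρ) y := by
  by_cases hy : y ∈ B
  · have hmem : ∀ᵐ x ∂ρ, f x ∈ B :=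
      (ae_map_iff hf.aemeasurable hB).1 (by rwa [h, ae_dirac_iff hB])
    rw [Measure.restrict_eq_self_of_ae_mem (s := f ⁻¹' B) hmem, Set.indicator_of_mem hy]
  · have hnull : ρ (f ⁻¹' B) = 0 := by
      rw [← Measure.map_apply hf hB, h, Measure.dirac_apply' _ hB, Set.indicator_of_notMem hy]
    rw [setIntegral_measure_zero φ hnull, Set.indicator_of_notMem hy]

namespace MeasureTheory.Measure

variable {ν : Measure Y} {κ : Kernel Y X} {φ : X → E}

theorem integral_comp (hφ : Integrable φ (κ ∘ₘ ν)) :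
    ∫ x, φ x ∂(κ ∘ₘ ν) = ∫ y, ∫ x, φ x ∂κ y ∂ν := by
  rw [comp_eq_comp_const_apply] at hφ ⊢
  rw [Kernel.integral_comp hφ, Kernel.const_apply]

theorem integrable_integral_of_integrable_comp (hφ : Integrable φ (κ ∘ₘ ν)) :
    Integrable (fun y ↦ ∫ x, φ x ∂κ y) ν := by
  rw [comp_eq_comp_const_apply] at hφ
  simpa using hφ.integral_comp

theorem setIntegral_preimage_comp_of_ae_map_eq_dirac {f : X → Y} (hf : Measurable f)
    (hκ : ∀ᵐ y ∂ν, (κ y).map f = dirac y) (hφ : Integrable φ (κ ∘ₘ ν))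
    {B : Set Y} (hB : MeasurableSet B) :
    ∫ x in f ⁻¹' B, φ x ∂(κ ∘ₘ ν) = ∫ y in B, ∫ x, φ x ∂κ y ∂ν :=
  calc ∫ x in f ⁻¹' B, φ x ∂(κ ∘ₘ ν)
      = ∫ y, ∫ x in f ⁻¹' B, φ x ∂κ y ∂ν := by
        rw [← integral_indicator (hf hB), integral_comp (hφ.indicator (hf hB))]
        simp_rw [integral_indicator (hf hB)]
    _ = ∫ y, B.indicator (fun y ↦ ∫ x, φ x ∂κ y) y ∂ν := by
        refine integral_congr_ae ?_
        filter_upwards [hκ] with y hy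
        exact setIntegral_preimage_of_map_eq_dirac hf hy hB φ
    _ = ∫ y in B, ∫ x, φ x ∂κ y ∂ν := integral_indicator hB

end MeasureTheory.Measure

theorem integral_kernel_ae_eq_condExp_comap [CompleteSpace E]
    {μ : Measure X} [IsFiniteMeasure μ] {κ : Kernel Y X} {f : X → Y} (hf : Measurable f)
    (hμ : κ ∘ₘ μ.map f = μ)
    (hκ : ∀ᵐ y ∂(μ.map f), (κ y).map f = Measure.dirac y)
    {φ : X → E} (hφm : StronglyMeasurable φ) (hφ : Integrable φ μ) :
    (fun x ↦ ∫ z, φ z ∂κ (f x)) =ᵐ[μ] μ[φ | MeasurableSpace.comap f inferInstance] := by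
  set F : Y → E := fun y ↦ ∫ x, φ x ∂κ y
  have hφκ : Integrable φ (κ ∘ₘ μ.map f) := by rwa [hμ]
  have hFm : StronglyMeasurable F := hφm.integral_kernel
  have hFint : Integrable F (μ.map f) := Measure.integrable_integral_of_integrable_comp hφκ
  refine ae_eq_condExp_of_forall_setIntegral_eq hf.comap_le hφ
    (fun _ _ _ ↦ (hFint.comp_measurable hf).integrableOn) ?_
    (hFm.comp_measurable (comap_measurable f)).aestronglyMeasurable
  rintro _ ⟨B, hB, rfl⟩ -
  rw [← setIntegral_map hB hFm.aestronglyMeasurable hf.aemeasurable]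
  conv_rhs => rw [← hμ]
  exact (Measure.setIntegral_preimage_comp_of_ae_map_eq_dirac hf hκ hφκ hB).symm

end

theorem disintegration_condexp_general
    {X Y : Type*}
    [MeasurableSpace X]
    [MeasurableSpace Y]
    (μ : Measure X) [IsProbabilityMeasure μ] (f : X → Y) (hf : Measurable f)
    (g : Y → Measure X) (hg : Measurable g)
    (hbind : (μ.map f).bind g = μ)
    (hdirac : ∀ᵐ y ∂(μ.map f), (g y).map f = Measure.dirac y)
    (φ : X → ℝ) (hφ : Measurable φ) (hint : Integrable φ μ) :
    (fun x => ∫ z, φ z ∂(g (f x)))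
      =ᵐ[μ] μ[φ | MeasurableSpace.comap f inferInstance] :=
  integral_kernel_ae_eq_condExp_comap (κ := ⟨g, hg⟩) hf hbind hdirac hφ.stronglyMeasurable hint

/-- A disintegration of `μ` along `f` computes the conditional expectation with
respect to the σ-algebra generated by `f`. -/
theorem disintegration_condexp
    {X Y : Type*}
    [MeasurableSpace X] [StandardBorelSpace X] [Nonempty X]
    [MeasurableSpace Y] [StandardBorelSpace Y] [Nonempty Y]
    (μ : Measure X) [IsProbabilityMeasure μ] (f : X → Y) (hf : Measurable f)
    (g : Y → Measure X) (hg : Measurable g) (hgP : ∀ y, IsProbabilityMeasure (g y))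
    (hbind : (μ.map f).bind g = μ)
    (hdirac : ∀ᵐ y ∂(μ.map f), (g y).map f = Measure.dirac y)
    (φ : X → ℝ) (hφ : Measurable φ) (hint : Integrable φ μ) :
    (fun x => ∫ z, φ z ∂(g (f x)))
      =ᵐ[μ] μ[φ | MeasurableSpace.comap f inferInstance] :=
  disintegration_condexp_general μ f hf g hg hbind hdirac φ hφ hint
end

section
/- (Existence and uniqueness of Bayesian inverses) Let X and Y be nonempty standard Borel spaces, f : X ⇸ Y a Markov kernel, μ a probability measure on X, and ν = μ.bind f. Then there exists a Markov kernel g : Y ⇸ X such that ν.bind g = μ and, for all measurable sets A ⊆ X and B ⊆ Y, ∫_A (f x)(B) dμ(x) = ∫_B (g y)(A) dν(y). Moreover, any two Markov kernels satisfying these equations agree at ν-almost every y ∈ Y. -/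
/-!
The Bayesian inverse is the posterior `κ†μ`, the disintegration of the joint law
`(μ ⊗ₘ κ).map Prod.swap` along its first marginal `κ ∘ₘ μ`. The defining identity
`∫⁻ x in A, κ x B ∂μ = ∫⁻ y in B, η y A ∂(κ ∘ₘ μ)` says exactly that `(κ ∘ₘ μ) ⊗ₘ η` and the
joint law agree on rectangles, hence everywhere, so a kernel satisfies it iff it disintegrates the
joint law; existence and a.e. uniqueness are then those of disintegrations.
-/

open MeasureTheory ProbabilityTheory

namespace ProbabilityTheory

variable {X Y : Type*} [MeasurableSpace X] [MeasurableSpace Y]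
  {μ : Measure X} {κ : Kernel X Y} {η : Kernel Y X}

lemma map_swap_compProd_apply_prod [SFinite μ] [IsSFiniteKernel κ] {A : Set X} {B : Set Y}
    (hA : MeasurableSet A) (hB : MeasurableSet B) :
    (μ ⊗ₘ κ).map Prod.swap (B ×ˢ A) = ∫⁻ x in A, κ x B ∂μ := by
  rw [Measure.map_apply measurable_swap (hB.prod hA), Set.preimage_swap_prod,
    Measure.compProd_apply_prod hA hB]

lemma setLIntegral_eq_iff_compProd_eq_map_swap [IsFiniteMeasure μ] [IsFiniteKernel κ]
    [IsSFiniteKernel η] :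
    (∀ (A : Set X) (B : Set Y), MeasurableSet A → MeasurableSet B →
        ∫⁻ x in A, κ x B ∂μ = ∫⁻ y in B, η y A ∂(κ ∘ₘ μ)) ↔
      (κ ∘ₘ μ) ⊗ₘ η = (μ ⊗ₘ κ).map Prod.swap := by
  rw [eq_comm, Measure.ext_prod_iff]
  constructor
  · intro h B A hB hA
    rw [map_swap_compProd_apply_prod hA hB, Measure.compProd_apply_prod hB hA, h A B hA hB]
  · intro h A B hA hB
    rw [← map_swap_compProd_apply_prod hA hB, h hB hA, Measure.compProd_apply_prod hB hA]

variable [StandardBorelSpace X] [Nonempty X] [IsFiniteMeasure μ] [IsFiniteKernel κ]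

lemma setLIntegral_posterior (A : Set X) (B : Set Y) (hA : MeasurableSet A)
    (hB : MeasurableSet B) :
    ∫⁻ x in A, κ x B ∂μ = ∫⁻ y in B, (κ†μ) y A ∂(κ ∘ₘ μ) :=
  setLIntegral_eq_iff_compProd_eq_map_swap.mpr compProd_posterior_eq_map_swap A B hA hB

lemma ae_eq_posterior_of_setLIntegral_eq [IsFiniteKernel η]
    (h : ∀ (A : Set X) (B : Set Y), MeasurableSet A → MeasurableSet B →
      ∫⁻ x in A, κ x B ∂μ = ∫⁻ y in B, η y A ∂(κ ∘ₘ μ)) :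
    η =ᵐ[κ ∘ₘ μ] κ†μ :=
  ae_eq_posterior_of_compProd_eq (setLIntegral_eq_iff_compProd_eq_map_swap.mp h)

end ProbabilityTheory

theorem bayesian_inverse_exists_unique_general
    {X Y : Type*}
    [MeasurableSpace X] [StandardBorelSpace X] [Nonempty X]
    [MeasurableSpace Y]
    (f : X → Measure Y) (hf : Measurable f) (hfP : ∀ x, IsProbabilityMeasure (f x))
    (μ : Measure X) [IsProbabilityMeasure μ] :
    (∃ g : Y → Measure X, Measurable g ∧ (∀ y, IsProbabilityMeasure (g y)) ∧
        (μ.bind f).bind g = μ ∧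
        ∀ (A : Set X) (B : Set Y), MeasurableSet A → MeasurableSet B →
          ∫⁻ x in A, f x B ∂μ = ∫⁻ y in B, g y A ∂(μ.bind f)) ∧
    (∀ g₁ g₂ : Y → Measure X,
      Measurable g₁ → (∀ y, IsProbabilityMeasure (g₁ y)) →
        (μ.bind f).bind g₁ = μ →
        (∀ (A : Set X) (B : Set Y), MeasurableSet A → MeasurableSet B →
          ∫⁻ x in A, f x B ∂μ = ∫⁻ y in B, g₁ y A ∂(μ.bind f)) →
      Measurable g₂ → (∀ y, IsProbabilityMeasure (g₂ y)) →
        (μ.bind f).bind g₂ = μ →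
        (∀ (A : Set X) (B : Set Y), MeasurableSet A → MeasurableSet B →
          ∫⁻ x in A, f x B ∂μ = ∫⁻ y in B, g₂ y A ∂(μ.bind f)) →
      ∀ᵐ y ∂(μ.bind f), g₁ y = g₂ y) := by
  let κ : Kernel X Y := ⟨f, hf⟩
  have : IsMarkovKernel κ := ⟨hfP⟩
  refine ⟨⟨κ†μ, (κ†μ).measurable, inferInstance, posterior_comp_self,
    setLIntegral_posterior (κ := κ)⟩,
    fun g₁ g₂ hg₁ hg₁P _ hg₁eq hg₂ hg₂P _ hg₂eq ↦ ?_⟩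
  let η₁ : Kernel Y X := ⟨g₁, hg₁⟩
  let η₂ : Kernel Y X := ⟨g₂, hg₂⟩
  have : IsMarkovKernel η₁ := ⟨hg₁P⟩
  have : IsMarkovKernel η₂ := ⟨hg₂P⟩
  filter_upwards [ae_eq_posterior_of_setLIntegral_eq (κ := κ) (η := η₁) hg₁eq,
    ae_eq_posterior_of_setLIntegral_eq (κ := κ) (η := η₂) hg₂eq] with y h₁ h₂
  exact h₁.trans h₂.symm

/-- Existence and uniqueness of Bayesian inverses of Markov kernels between
standard Borel spaces. -/
theorem bayesian_inverse_exists_unique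
    {X Y : Type*}
    [MeasurableSpace X] [StandardBorelSpace X] [Nonempty X]
    [MeasurableSpace Y] [StandardBorelSpace Y] [Nonempty Y]
    (f : X → Measure Y) (hf : Measurable f) (hfP : ∀ x, IsProbabilityMeasure (f x))
    (μ : Measure X) [IsProbabilityMeasure μ] :
    (∃ g : Y → Measure X, Measurable g ∧ (∀ y, IsProbabilityMeasure (g y)) ∧
        (μ.bind f).bind g = μ ∧
        ∀ (A : Set X) (B : Set Y), MeasurableSet A → MeasurableSet B →
          ∫⁻ x in A, f x B ∂μ = ∫⁻ y in B, g y A ∂(μ.bind f)) ∧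
    (∀ g₁ g₂ : Y → Measure X,
      Measurable g₁ → (∀ y, IsProbabilityMeasure (g₁ y)) →
        (μ.bind f).bind g₁ = μ →
        (∀ (A : Set X) (B : Set Y), MeasurableSet A → MeasurableSet B →
          ∫⁻ x in A, f x B ∂μ = ∫⁻ y in B, g₁ y A ∂(μ.bind f)) →
      Measurable g₂ → (∀ y, IsProbabilityMeasure (g₂ y)) →
        (μ.bind f).bind g₂ = μ →
        (∀ (A : Set X) (B : Set Y), MeasurableSet A → MeasurableSet B →
          ∫⁻ x in A, f x B ∂μ = ∫⁻ y in B, g₂ y A ∂(μ.bind f)) →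
      ∀ᵐ y ∂(μ.bind f), g₁ y = g₂ y) :=
  bayesian_inverse_exists_unique_general f hf hfP μ
end

section
/- (Bayesian inversion is functorial) Let X, Y, Z be nonempty standard Borel spaces, μ a probability measure on X, f : X ⇸ Y and h : Y ⇸ Z Markov kernels, ν = μ.bind f and ρ = ν.bind h. If f† : Y ⇸ X is a Bayesian inverse of f with respect to μ and h† : Z ⇸ Y is a Bayesian inverse of h with respect to ν, then the composite kernel f† ∘ h† : Z ⇸ X is a Bayesian inverse of h ∘ f : X ⇸ Z with respect to μ. -/
/-!
The Bayes condition for `g` against `f` says that `μ` restricted to `A`, pushed through `f`, is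
`ν` with density `y ↦ g y A`. Integrating a further kernel `k` therefore turns
`∫_A ((f x).bind k) C dμ(x)` into `∫ g y A * k y C dν(y)`. Applied once through `fd` and once
through `hd`, this reduces both sides of the Bayes condition for the composite to the same
symmetric integral `∫ fd y A * h y B dν(y)`.
-/

open MeasureTheory

/-- `g` is a Bayesian inverse of the Markov kernel `f` with respect to the
probability measure `μ` (with `ν = μ.bind f`). -/
def IsBayesInv {X Y : Type*} [MeasurableSpace X] [MeasurableSpace Y]
    (μ : Measure X) (f : X → Measure Y) (g : Y → Measure X) : Prop :=
  Measurable g ∧ (∀ y, IsProbabilityMeasure (g y)) ∧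
  (μ.bind f).bind g = μ ∧
  ∀ (A : Set X) (B : Set Y), MeasurableSet A → MeasurableSet B →
    ∫⁻ x in A, f x B ∂μ = ∫⁻ y in B, g y A ∂(μ.bind f)

namespace MeasureTheory.Measure

variable {X Y Z : Type*} [MeasurableSpace X] [MeasurableSpace Y] [MeasurableSpace Z]
  {μ : Measure X} {ν : Measure Y} {f : X → Measure Y} {g : Y → Measure X} {A : Set X}

theorem bind_restrict_eq_withDensity (hf : Measurable f)
    (hbayes : ∀ B, MeasurableSet B → ∫⁻ x in A, f x B ∂μ = ∫⁻ y in B, g y A ∂ν) :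
    (μ.restrict A).bind f = ν.withDensity fun y => g y A := by
  ext B hB
  rw [bind_apply hB hf.aemeasurable, withDensity_apply _ hB, hbayes B hB]

theorem setLIntegral_bind_apply_eq_lintegral_mul (hf : Measurable f) (hg : Measurable g)
    (hA : MeasurableSet A)
    (hbayes : ∀ B, MeasurableSet B → ∫⁻ x in A, f x B ∂μ = ∫⁻ y in B, g y A ∂ν)
    {k : Y → Measure Z} (hk : Measurable k) {C : Set Z} (hC : MeasurableSet C) :
    ∫⁻ x in A, (f x).bind k C ∂μ = ∫⁻ y, g y A * k y C ∂ν := by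
  have hgA : Measurable fun y => g y A := (measurable_coe hA).comp hg
  have hkC : Measurable fun y => k y C := (measurable_coe hC).comp hk
  calc ∫⁻ x in A, (f x).bind k C ∂μ = ∫⁻ x in A, ∫⁻ y, k y C ∂f x ∂μ := by
        simp only [bind_apply hC hk.aemeasurable]
    _ = ∫⁻ y, k y C ∂(μ.restrict A).bind f :=
        (lintegral_bind hf.aemeasurable hkC.aemeasurable).symm
    _ = ∫⁻ y, g y A * k y C ∂ν := by
        rw [bind_restrict_eq_withDensity hf hbayes,
          lintegral_withDensity_eq_lintegral_mul _ hgA hkC]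
        rfl

end MeasureTheory.Measure

theorem bayesian_inverse_comp_general
    {X Y Z : Type*}
    [MeasurableSpace X]
    [MeasurableSpace Y]
    [MeasurableSpace Z]
    (μ : Measure X)
    (f : X → Measure Y) (hf : Measurable f)
    (h : Y → Measure Z) (hh : Measurable h)
    (fd : Y → Measure X) (hfd : IsBayesInv μ f fd)
    (hd : Z → Measure Y) (hhd : IsBayesInv (μ.bind f) h hd) :
    IsBayesInv μ (fun x => (f x).bind h) (fun z => (hd z).bind fd) := by
  obtain ⟨hfd_meas, hfd_prob, hfd_bind, hfd_bayes⟩ := hfd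
  obtain ⟨hhd_meas, hhd_prob, hhd_bind, hhd_bayes⟩ := hhd
  have hcomp : μ.bind (fun x => (f x).bind h) = (μ.bind f).bind h :=
    (Measure.bind_bind hf.aemeasurable hh.aemeasurable).symm
  refine ⟨(Measure.measurable_bind' hfd_meas).comp hhd_meas,
    fun z => isProbabilityMeasure_bind hfd_meas.aemeasurable (.of_forall hfd_prob), ?_, ?_⟩
  · rw [hcomp, ← Measure.bind_bind hhd_meas.aemeasurable hfd_meas.aemeasurable, hhd_bind,
      hfd_bind]
  · intro A B hA hB
    rw [hcomp,
      Measure.setLIntegral_bind_apply_eq_lintegral_mul hf hfd_meas hA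
        (fun B' hB' => hfd_bayes A B' hA hB') hh hB,
      Measure.setLIntegral_bind_apply_eq_lintegral_mul hhd_meas hh hB
        (fun B' hB' => (hhd_bayes B' B hB' hB).symm) hfd_meas hA]
    exact lintegral_congr fun y => mul_comm _ _

/-- Bayesian inversion is functorial: the composite of Bayesian inverses is a
Bayesian inverse of the composite. -/
theorem bayesian_inverse_comp
    {X Y Z : Type*}
    [MeasurableSpace X] [StandardBorelSpace X] [Nonempty X]
    [MeasurableSpace Y] [StandardBorelSpace Y] [Nonempty Y]
    [MeasurableSpace Z] [StandardBorelSpace Z] [Nonempty Z]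
    (μ : Measure X) [IsProbabilityMeasure μ]
    (f : X → Measure Y) (hf : Measurable f) (hfP : ∀ x, IsProbabilityMeasure (f x))
    (h : Y → Measure Z) (hh : Measurable h) (hhP : ∀ y, IsProbabilityMeasure (h y))
    (fd : Y → Measure X) (hfd : IsBayesInv μ f fd)
    (hd : Z → Measure Y) (hhd : IsBayesInv (μ.bind f) h hd) :
    IsBayesInv μ (fun x => (f x).bind h) (fun z => (hd z).bind fd) :=
  bayesian_inverse_comp_general μ f hf h hh fd hfd hd hhd
end

section
/- (Bayesian inversion respects the monoidal product) Let X₁, Y₁, X₂, Y₂ be nonempty standard Borel spaces, μᵢ probability measures on Xᵢ, fᵢ : Xᵢ ⇸ Yᵢ Markov kernels with νᵢ = μᵢ.bind fᵢ, for i = 1, 2. Let f₁ ⊗ f₂ : X₁ × X₂ ⇸ Y₁ × Y₂ denote the product kernel (x₁, x₂) ↦ (f₁ x₁) ⊗ (f₂ x₂). Then (μ₁ ⊗ μ₂).bind (f₁ ⊗ f₂) = ν₁ ⊗ ν₂, and if f₁† and f₂† are Bayesian inverses of f₁ and f₂ with respect to μ₁ and μ₂ respectively, then f₁† ⊗ f₂†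 is a Bayesian inverse of f₁ ⊗ f₂ with respect to μ₁ ⊗ μ₂. -/
open MeasureTheory

/-!
A Markov kernel `g` is a Bayesian inverse of `f` with respect to `μ` exactly when the joint law
`μ ⊗ₘ f` on `X × Y` is the image under `Prod.swap` of the joint law `(μ.bind f) ⊗ₘ g`. For product
kernels, the joint law of `μ₁ × μ₂` under `f₁ ⊗ f₂` is the product of the two joint laws up to a
reordering of coordinates, which commutes with swapping. Both sides are finite measures on
`(X₁ × X₂) × (Y₁ × Y₂)`, so it suffices to compare them on rectangles of rectangles, where
everything factorizes by Tonelli.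
-/

open ProbabilityTheory Set

section

variable {α β γ δ : Type*} [MeasurableSpace α] [MeasurableSpace β]
  [MeasurableSpace γ] [MeasurableSpace δ]

namespace MeasureTheory.Measure

lemma parallelComp_comp_prod (μ : Measure α) (ν : Measure β) [SFinite μ] [SFinite ν]
    (κ : Kernel α γ) (η : Kernel β δ) [IsSFiniteKernel κ] [IsSFiniteKernel η] :
    (κ ∥ₖ η) ∘ₘ (μ.prod ν) = (κ ∘ₘ μ).prod (η ∘ₘ ν) := by
  have h : κ ∥ₖ η = (κ ∥ₖ Kernel.id) ∘ₖ (Kernel.id ∥ₖ η) := by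
    rw [Kernel.parallelComp_comp_parallelComp, Kernel.comp_id, Kernel.id_comp]
  rw [h, ← comp_assoc, ← prod_comp_right, ← prod_comp_left]

lemma ext_prod_prod {μ ν : Measure ((α × β) × (γ × δ))} [IsFiniteMeasure μ]
    (h : ∀ {a : Set α} {b : Set β} {c : Set γ} {d : Set δ}, MeasurableSet a → MeasurableSet b →
      MeasurableSet c → MeasurableSet d → μ ((a ×ˢ b) ×ˢ (c ×ˢ d)) = ν ((a ×ˢ b) ×ˢ (c ×ˢ d))) :
    μ = ν := by
  have h_univ : μ univ = ν univ := by
    simpa only [univ_prod_univ] using h .univ .univ .univ .univ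
  have : IsFiniteMeasure ν := ⟨by simp [← h_univ]⟩
  have h_span := isCountablySpanning_measurableSet (α := α).prod
    (isCountablySpanning_measurableSet (α := β))
  have h_span' := isCountablySpanning_measurableSet (α := γ).prod
    (isCountablySpanning_measurableSet (α := δ))
  refine ext_of_generate_finite _
    (generateFrom_eq_prod generateFrom_prod generateFrom_prod h_span h_span').symm
    (isPiSystem_prod.prod isPiSystem_prod) ?_ h_univ
  rintro - ⟨-, ⟨a, ha, b, hb, rfl⟩, -, ⟨c, hc, d, hd, rfl⟩, rfl⟩
  exact h ha hb hc hd

lemma prod_compProd_parallelComp (μ : Measure α) (ν : Measure β) [IsFiniteMeasure μ]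
    [IsFiniteMeasure ν] (κ : Kernel α γ) (η : Kernel β δ) [IsFiniteKernel κ] [IsFiniteKernel η] :
    (μ.prod ν) ⊗ₘ (κ ∥ₖ η) =
      ((μ ⊗ₘ κ).prod (ν ⊗ₘ η)).map fun p ↦ ((p.1.1, p.2.1), (p.1.2, p.2.2)) := by
  refine ext_prod_prod fun {a b c d} ha hb hc hd ↦ ?_
  have h_preimage : (fun p : (α × γ) × (β × δ) ↦ ((p.1.1, p.2.1), (p.1.2, p.2.2))) ⁻¹'
      ((a ×ˢ b) ×ˢ (c ×ˢ d)) = (a ×ˢ c) ×ˢ (b ×ˢ d) := by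
    ext; simp only [mem_preimage, mem_prod]; tauto
  rw [compProd_apply_prod (ha.prod hb) (hc.prod hd),
    map_apply (by fun_prop) ((ha.prod hb).prod (hc.prod hd)), h_preimage, prod_prod,
    compProd_apply_prod ha hc, compProd_apply_prod hb hd, ← prod_restrict]
  simp_rw [Kernel.parallelComp_apply_prod]
  exact lintegral_prod_mul ((κ.measurable_coe hc).aemeasurable)
    ((η.measurable_coe hd).aemeasurable)

end MeasureTheory.Measure

lemma isBayesInv_iff_compProd_eq_map_swap (μ : Measure α) [IsProbabilityMeasure μ]
    (κ : Kernel α β) (η : Kernel β α) [IsMarkovKernel κ] [IsMarkovKernel η] :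
    IsBayesInv μ κ η ↔ μ ⊗ₘ κ = ((κ ∘ₘ μ) ⊗ₘ η).map Prod.swap := by
  have h_joint : (∀ (A : Set α) (B : Set β), MeasurableSet A → MeasurableSet B →
      ∫⁻ x in A, κ x B ∂μ = ∫⁻ y in B, η y A ∂(κ ∘ₘ μ)) ↔
      μ ⊗ₘ κ = ((κ ∘ₘ μ) ⊗ₘ η).map Prod.swap := by
    rw [Measure.ext_prod_iff]
    refine forall₂_congr fun A B ↦ forall₂_congr fun hA hB ↦ ?_
    rw [Measure.compProd_apply_prod hA hB, Measure.map_apply measurable_swap (hA.prod hB),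
      preimage_swap_prod, Measure.compProd_apply_prod hB hA]
  refine ⟨fun h ↦ h_joint.1 h.2.2.2, fun h ↦ ⟨η.measurable, inferInstance, ?_, h_joint.2 h⟩⟩
  calc η ∘ₘ (κ ∘ₘ μ) = (((κ ∘ₘ μ) ⊗ₘ η).map Prod.swap).fst := by simp
    _ = μ := by rw [← h, Measure.fst_compProd]

lemma IsBayesInv.parallelComp {μ₁ : Measure α} {μ₂ : Measure γ} [IsProbabilityMeasure μ₁]
    [IsProbabilityMeasure μ₂] {κ₁ : Kernel α β} {η₁ : Kernel β α} {κ₂ : Kernel γ δ}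
    {η₂ : Kernel δ γ} [IsMarkovKernel κ₁] [IsMarkovKernel η₁] [IsMarkovKernel κ₂]
    [IsMarkovKernel η₂] (h₁ : IsBayesInv μ₁ κ₁ η₁) (h₂ : IsBayesInv μ₂ κ₂ η₂) :
    IsBayesInv (μ₁.prod μ₂) (κ₁ ∥ₖ κ₂) (η₁ ∥ₖ η₂) := by
  rw [isBayesInv_iff_compProd_eq_map_swap] at h₁ h₂ ⊢
  rw [Measure.prod_compProd_parallelComp, h₁, h₂,
    Measure.map_prod_map _ _ measurable_swap measurable_swap, Measure.map_map (by fun_prop)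
      (by fun_prop), Measure.parallelComp_comp_prod, Measure.prod_compProd_parallelComp,
    Measure.map_map (by fun_prop) (by fun_prop)]
  -- reordering `(α × β) × (γ × δ)` into `(α × γ) × (β × δ)` commutes with swapping
  rfl

end

theorem bayesian_inverse_prod_general
    {X₁ Y₁ X₂ Y₂ : Type*}
    [MeasurableSpace X₁]
    [MeasurableSpace Y₁]
    [MeasurableSpace X₂]
    [MeasurableSpace Y₂]
    (μ₁ : Measure X₁) [IsProbabilityMeasure μ₁]
    (μ₂ : Measure X₂) [IsProbabilityMeasure μ₂]
    (f₁ : X₁ → Measure Y₁) (hf₁ : Measurable f₁)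
    (hf₁P : ∀ x, IsProbabilityMeasure (f₁ x))
    (f₂ : X₂ → Measure Y₂) (hf₂ : Measurable f₂)
    (hf₂P : ∀ x, IsProbabilityMeasure (f₂ x))
    (fd₁ : Y₁ → Measure X₁) (fd₂ : Y₂ → Measure X₂) :
    (μ₁.prod μ₂).bind (fun x : X₁ × X₂ => (f₁ x.1).prod (f₂ x.2))
        = (μ₁.bind f₁).prod (μ₂.bind f₂) ∧
    (IsBayesInv μ₁ f₁ fd₁ → IsBayesInv μ₂ f₂ fd₂ →
      IsBayesInv (μ₁.prod μ₂) (fun x : X₁ × X₂ => (f₁ x.1).prod (f₂ x.2))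
        (fun y : Y₁ × Y₂ => (fd₁ y.1).prod (fd₂ y.2))) := by
  let κ₁ : Kernel X₁ Y₁ := ⟨f₁, hf₁⟩
  let κ₂ : Kernel X₂ Y₂ := ⟨f₂, hf₂⟩
  have : IsMarkovKernel κ₁ := ⟨hf₁P⟩
  have : IsMarkovKernel κ₂ := ⟨hf₂P⟩
  have hκ : (fun x : X₁ × X₂ => (f₁ x.1).prod (f₂ x.2)) = ⇑(κ₁ ∥ₖ κ₂) :=
    funext fun x ↦ (Kernel.parallelComp_apply κ₁ κ₂ x).symm
  rw [hκ]
  refine ⟨Measure.parallelComp_comp_prod μ₁ μ₂ κ₁ κ₂, fun h₁ h₂ ↦ ?_⟩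
  let η₁ : Kernel Y₁ X₁ := ⟨fd₁, h₁.1⟩
  let η₂ : Kernel Y₂ X₂ := ⟨fd₂, h₂.1⟩
  have : IsMarkovKernel η₁ := ⟨h₁.2.1⟩
  have : IsMarkovKernel η₂ := ⟨h₂.2.1⟩
  have hη : (fun y : Y₁ × Y₂ => (fd₁ y.1).prod (fd₂ y.2)) = ⇑(η₁ ∥ₖ η₂) :=
    funext fun y ↦ (Kernel.parallelComp_apply η₁ η₂ y).symm
  rw [hη]
  exact IsBayesInv.parallelComp (κ₁ := κ₁) (κ₂ := κ₂) h₁ h₂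

/-- Bayesian inversion respects the monoidal (product) structure. -/
theorem bayesian_inverse_prod
    {X₁ Y₁ X₂ Y₂ : Type*}
    [MeasurableSpace X₁] [StandardBorelSpace X₁] [Nonempty X₁]
    [MeasurableSpace Y₁] [StandardBorelSpace Y₁] [Nonempty Y₁]
    [MeasurableSpace X₂] [StandardBorelSpace X₂] [Nonempty X₂]
    [MeasurableSpace Y₂] [StandardBorelSpace Y₂] [Nonempty Y₂]
    (μ₁ : Measure X₁) [IsProbabilityMeasure μ₁]
    (μ₂ : Measure X₂) [IsProbabilityMeasure μ₂]
    (f₁ : X₁ → Measure Y₁) (hf₁ : Measurable f₁)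
    (hf₁P : ∀ x, IsProbabilityMeasure (f₁ x))
    (f₂ : X₂ → Measure Y₂) (hf₂ : Measurable f₂)
    (hf₂P : ∀ x, IsProbabilityMeasure (f₂ x))
    (fd₁ : Y₁ → Measure X₁) (fd₂ : Y₂ → Measure X₂) :
    (μ₁.prod μ₂).bind (fun x : X₁ × X₂ => (f₁ x.1).prod (f₂ x.2))
        = (μ₁.bind f₁).prod (μ₂.bind f₂) ∧
    (IsBayesInv μ₁ f₁ fd₁ → IsBayesInv μ₂ f₂ fd₂ →
      IsBayesInv (μ₁.prod μ₂) (fun x : X₁ × X₂ => (f₁ x.1).prod (f₂ x.2))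
        (fun y : Y₁ × Y₂ => (fd₁ y.1).prod (fd₂ y.2))) :=
  bayesian_inverse_prod_general μ₁ μ₂ f₁ hf₁ hf₁P f₂ hf₂ hf₂P fd₁ fd₂
end

section
/- Let X, Y be nonempty standard Borel spaces, f : X ⇸ Y a Markov kernel, μ a probability measure on X, ν = μ.bind f, and let f† : Y ⇸ X be a Bayesian inverse of f with respect to μ. Then for every ν-integrable measurable function φ : Y → ℝ and every measurable set A ⊆ X: ∫_A (∫_Y φ d(f x)) dμ(x) = ∫_Y φ(y) · (f† y)(A) dν(y). -/
/-!
Restricting `μ` to `A` and pushing it through `f` gives the measure `B ↦ ∫_A (f x)(B) dμ`,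
which the defining identity of a Bayesian inverse rewrites as `ν` with density `y ↦ (f† y)(A)`.
Integrating `φ` against this measure in both descriptions gives the two sides of the formula.
-/

open MeasureTheory ProbabilityTheory
open scoped ENNReal

namespace MeasureTheory.Measure

variable {α β : Type*} [MeasurableSpace α] [MeasurableSpace β]

theorem integral_bind {E : Type*} [NormedAddCommGroup E] [NormedSpace ℝ E]
    {μ : Measure α} {f : α → Measure β} (hf : Measurable f) {g : β → E}
    (hg : Integrable g (μ.bind f)) :
    ∫ y, g y ∂μ.bind f = ∫ x, ∫ y, g y ∂f x ∂μ := by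
  let κ : Kernel α β := ⟨f, hf⟩
  have hκ : μ.bind f = (κ ∘ₖ Kernel.const Unit μ) () := by
    rw [Kernel.comp_apply, Kernel.const_apply]
    rfl
  rw [hκ] at hg ⊢
  exact Kernel.integral_comp hg

end MeasureTheory.Measure

namespace IsBayesInv

variable {X Y : Type*} [MeasurableSpace X] [MeasurableSpace Y]
  {μ : Measure X} {f : X → Measure Y} {g : Y → Measure X}

theorem restrict_bind_eq_withDensity (hg : IsBayesInv μ f g) (hf : Measurable f) {A : Set X}
    (hA : MeasurableSet A) :
    (μ.restrict A).bind f = (μ.bind f).withDensity fun y ↦ g y A := by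
  ext B hB
  rw [Measure.bind_apply hB hf.aemeasurable, withDensity_apply _ hB]
  exact hg.2.2.2 A B hA hB

theorem apply_le_one (hg : IsBayesInv μ f g) (y : Y) (A : Set X) : g y A ≤ 1 :=
  haveI := hg.2.1 y
  prob_le_one

theorem measurable_apply (hg : IsBayesInv μ f g) {A : Set X} (hA : MeasurableSet A) :
    Measurable fun y ↦ g y A :=
  (Measure.measurable_coe hA).comp hg.1

end IsBayesInv

theorem bayesian_inverse_integral_general
    {X Y : Type*}
    [MeasurableSpace X] [MeasurableSpace Y]
    (f : X → Measure Y) (hf : Measurable f)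
    (μ : Measure X)
    (fd : Y → Measure X) (hfd : IsBayesInv μ f fd)
    (φ : Y → ℝ) (hint : Integrable φ (μ.bind f))
    (A : Set X) (hA : MeasurableSet A) :
    ∫ x in A, (∫ y, φ y ∂(f x)) ∂μ
      = ∫ y, φ y * (fd y A).toReal ∂(μ.bind f) := by
  have hM := hfd.restrict_bind_eq_withDensity hf hA
  have hM_le : (μ.restrict A).bind f ≤ μ.bind f := by
    rw [hM]
    simpa using withDensity_mono (μ := μ.bind f) (ae_of_all _ fun y ↦ hfd.apply_le_one y A)
  have hlt_top : ∀ᵐ y ∂μ.bind f, fd y A < ∞ :=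
    ae_of_all _ fun y ↦ (hfd.apply_le_one y A).trans_lt ENNReal.one_lt_top
  calc ∫ x in A, (∫ y, φ y ∂(f x)) ∂μ
      = ∫ y, φ y ∂(μ.restrict A).bind f :=
        (Measure.integral_bind hf (hint.mono_measure hM_le)).symm
    _ = ∫ y, (fd y A).toReal • φ y ∂μ.bind f := by
      rw [hM, integral_withDensity_eq_integral_toReal_smul (hfd.measurable_apply hA) hlt_top]
    _ = ∫ y, φ y * (fd y A).toReal ∂(μ.bind f) := by simp_rw [smul_eq_mul, mul_comm]

/-- Integral formula for Bayesian inverses: for every `ν`-integrable `φ` and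
measurable `A`, `∫_A (∫ φ d(f x)) dμ = ∫ φ(y) · (f† y)(A) dν`. -/
theorem bayesian_inverse_integral
    {X Y : Type*}
    [MeasurableSpace X] [StandardBorelSpace X] [Nonempty X]
    [MeasurableSpace Y] [StandardBorelSpace Y] [Nonempty Y]
    (f : X → Measure Y) (hf : Measurable f) (hfP : ∀ x, IsProbabilityMeasure (f x))
    (μ : Measure X) [IsProbabilityMeasure μ]
    (fd : Y → Measure X) (hfd : IsBayesInv μ f fd)
    (φ : Y → ℝ) (hφ : Measurable φ) (hint : Integrable φ (μ.bind f))
    (A : Set X) (hA : MeasurableSet A) :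
    ∫ x in A, (∫ y, φ y ∂(f x)) ∂μ
      = ∫ y, φ y * (fd y A).toReal ∂(μ.bind f) :=
  bayesian_inverse_integral_general f hf μ fd hfd φ hint A hA
end

section
/- (Naturality of the Radon–Nikodym derivative) Let X, Y be nonempty standard Borel spaces, f : X ⇸ Y a Markov kernel, μ a probability measure on X, ν = μ.bind f, and let f† : Y ⇸ X be a Bayesian inverse of f with respect to μ. Let ρ be a finite measure on X that is absolutely continuous with respect to μ. Then for ν-almost every y ∈ Y, the Radon–Nikodym derivative of ρ.bind f with respect to ν satisfies d(ρ.bind f)/dν (y) = ∫_X (dρ/dμ) d(f† y). -/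
open MeasureTheory

/-!
The Bayesian-inverse identity `∫_A f(·)(B) dμ = ∫_B g(·)(A) dν` says that, for each measurable
`B`, the measures `μ.withDensity (f · B)` and `(ν.restrict B).bind g` agree. Integrating a density
`φ` against both sides shows `(μ.withDensity φ).bind f = ν.withDensity (y ↦ ∫ φ d(g y))`; applied to
`φ = dρ/dμ`, whose density measure is `ρ`, this identifies `d(ρ.bind f)/dν`.
-/

namespace IsBayesInv

variable {X Y : Type*} [MeasurableSpace X] [MeasurableSpace Y]
  {μ : Measure X} {f : X → Measure Y} {g : Y → Measure X}

theorem withDensity_eq_bind_restrict (hg : IsBayesInv μ f g) {B : Set Y} (hB : MeasurableSet B) :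
    μ.withDensity (fun x => f x B) = ((μ.bind f).restrict B).bind g := by
  ext A hA
  rw [withDensity_apply _ hA, Measure.bind_apply hA hg.1.aemeasurable, hg.2.2.2 A B hA hB]

theorem withDensity_bind (hg : IsBayesInv μ f g) (hf : Measurable f) {φ : X → ENNReal}
    (hφ : Measurable φ) :
    (μ.withDensity φ).bind f = (μ.bind f).withDensity (fun y => ∫⁻ x, φ x ∂(g y)) := by
  ext B hB
  have hfB : Measurable fun x => f x B := (Measure.measurable_coe hB).comp hf
  calc (μ.withDensity φ).bind f B = ∫⁻ x, φ x * f x B ∂μ := by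
        rw [Measure.bind_apply hB hf.aemeasurable,
          lintegral_withDensity_eq_lintegral_mul μ hφ hfB]
        rfl
    _ = ∫⁻ x, φ x ∂(μ.withDensity fun x => f x B) := by
        rw [lintegral_withDensity_eq_lintegral_mul μ hfB hφ]
        simp only [Pi.mul_apply, mul_comm]
    _ = ∫⁻ y in B, ∫⁻ x, φ x ∂(g y) ∂(μ.bind f) := by
        rw [hg.withDensity_eq_bind_restrict hB, Measure.lintegral_bind hg.1.aemeasurable
          hφ.aemeasurable]
    _ = _ := (withDensity_apply _ hB).symm

end IsBayesInv

theorem radonNikodym_natural_general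
    {X Y : Type*}
    [MeasurableSpace X]
    [MeasurableSpace Y]
    (f : X → Measure Y) (hf : Measurable f) (hfP : ∀ x, IsProbabilityMeasure (f x))
    (μ : Measure X) [IsProbabilityMeasure μ]
    (fd : Y → Measure X) (hfd : IsBayesInv μ f fd)
    (ρ : Measure X) [IsFiniteMeasure ρ] (hac : ρ ≪ μ) :
    ∀ᵐ y ∂(μ.bind f),
      (ρ.bind f).rnDeriv (μ.bind f) y = ∫⁻ x, ρ.rnDeriv μ x ∂(fd y) := by
  have : IsProbabilityMeasure (μ.bind f) :=
    isProbabilityMeasure_bind hf.aemeasurable (.of_forall hfP)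
  have hρ : ρ.bind f = (μ.bind f).withDensity fun y => ∫⁻ x, ρ.rnDeriv μ x ∂(fd y) := by
    rw [← hfd.withDensity_bind hf (ρ.measurable_rnDeriv μ), Measure.withDensity_rnDeriv_eq ρ μ hac]
  rw [hρ]
  exact Measure.rnDeriv_withDensity _
    ((Measure.measurable_lintegral (ρ.measurable_rnDeriv μ)).comp hfd.1)

/-- Naturality of the Radon–Nikodym derivative: for `ρ ≪ μ`,
`d(ρ.bind f)/dν = ∫ dρ/dμ d(f† y)` for `ν`-a.e. `y`. -/
theorem radonNikodym_natural
    {X Y : Type*}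
    [MeasurableSpace X] [StandardBorelSpace X] [Nonempty X]
    [MeasurableSpace Y] [StandardBorelSpace Y] [Nonempty Y]
    (f : X → Measure Y) (hf : Measurable f) (hfP : ∀ x, IsProbabilityMeasure (f x))
    (μ : Measure X) [IsProbabilityMeasure μ]
    (fd : Y → Measure X) (hfd : IsBayesInv μ f fd)
    (ρ : Measure X) [IsFiniteMeasure ρ] (hac : ρ ≪ μ) :
    ∀ᵐ y ∂(μ.bind f),
      (ρ.bind f).rnDeriv (μ.bind f) y = ∫⁻ x, ρ.rnDeriv μ x ∂(fd y) :=
  radonNikodym_natural_general f hf hfP μ fd hfd ρ hac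
end

section
/- (Naturality of the measure representation) Let X, Y be nonempty standard Borel spaces, f : X ⇸ Y a Markov kernel, μ a probability measure on X, ν = μ.bind f, and let f† : Y ⇸ X be a Bayesian inverse of f with respect to μ. Then for every measurable function φ : X → [0,∞], the measures (μ.withDensity φ).bind f and ν.withDensity (y ↦ ∫_X φ d(f† y)) on Y are equal, i.e. for every measurable B ⊆ Y: ∫_X (f x)(B) · φ(x) dμ(x) = ∫_B (∫_X φ d(f† y)) dν(y). -/
open MeasureTheory

/-!
For a fixed measurable `B`, the Bayes identity says that the measures `A ↦ ∫_A (f x)(B) dμ` and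
`A ↦ ∫_B (g y)(A) dν` on `X` coincide. Integrating `φ` against both gives the pointwise identity,
and the equality of measures is that identity read through `bind_apply` and `withDensity_apply`.
-/

namespace IsBayesInv

variable {X Y : Type*} [MeasurableSpace X] [MeasurableSpace Y]
  {μ : Measure X} {f : X → Measure Y} {g : Y → Measure X}

theorem lintegral_mul_eq_setLIntegral_lintegral (hg : IsBayesInv μ f g) (hf : Measurable f)
    {φ : X → ENNReal} (hφ : Measurable φ) {B : Set Y} (hB : MeasurableSet B) :
    ∫⁻ x, f x B * φ x ∂μ = ∫⁻ y in B, ∫⁻ x, φ x ∂(g y) ∂(μ.bind f) := by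
  have hfB : Measurable fun x => f x B := (Measure.measurable_coe hB).comp hf
  calc ∫⁻ x, f x B * φ x ∂μ = ∫⁻ x, φ x ∂μ.withDensity (fun x => f x B) :=
        (lintegral_withDensity_eq_lintegral_mul μ hfB hφ).symm
    _ = ∫⁻ y in B, ∫⁻ x, φ x ∂(g y) ∂(μ.bind f) := by
      rw [hg.withDensity_eq_bind_restrict hB,
        Measure.lintegral_bind hg.1.aemeasurable hφ.aemeasurable]

end IsBayesInv

theorem measure_representation_natural_general
    {X Y : Type*}
    [MeasurableSpace X]
    [MeasurableSpace Y]
    (f : X → Measure Y) (hf : Measurable f)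
    (μ : Measure X)
    (fd : Y → Measure X) (hfd : IsBayesInv μ f fd)
    (φ : X → ENNReal) (hφ : Measurable φ) :
    (μ.withDensity φ).bind f
        = (μ.bind f).withDensity (fun y => ∫⁻ x, φ x ∂(fd y)) ∧
    ∀ B : Set Y, MeasurableSet B →
      ∫⁻ x, f x B * φ x ∂μ = ∫⁻ y in B, (∫⁻ x, φ x ∂(fd y)) ∂(μ.bind f) := by
  have key := fun B (hB : MeasurableSet B) => hfd.lintegral_mul_eq_setLIntegral_lintegral hf hφ hB
  refine ⟨Measure.ext fun B hB => ?_, key⟩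
  have hfB : Measurable fun x => f x B := (Measure.measurable_coe hB).comp hf
  rw [Measure.bind_apply hB hf.aemeasurable, withDensity_apply _ hB, ← key B hB,
    lintegral_withDensity_eq_lintegral_mul _ hφ hfB]
  simp only [Pi.mul_apply, mul_comm]

/-- Naturality of the measure representation:
`(μ.withDensity φ).bind f = ν.withDensity (fun y => ∫ φ d(f† y))`. -/
theorem measure_representation_natural
    {X Y : Type*}
    [MeasurableSpace X] [StandardBorelSpace X] [Nonempty X]
    [MeasurableSpace Y] [StandardBorelSpace Y] [Nonempty Y]
    (f : X → Measure Y) (hf : Measurable f) (hfP : ∀ x, IsProbabilityMeasure (f x))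
    (μ : Measure X) [IsProbabilityMeasure μ]
    (fd : Y → Measure X) (hfd : IsBayesInv μ f fd)
    (φ : X → ENNReal) (hφ : Measurable φ) :
    (μ.withDensity φ).bind f
        = (μ.bind f).withDensity (fun y => ∫⁻ x, φ x ∂(fd y)) ∧
    ∀ B : Set Y, MeasurableSet B →
      ∫⁻ x, f x B * φ x ∂μ = ∫⁻ y in B, (∫⁻ x, φ x ∂(fd y)) ∂(μ.bind f) :=
  measure_representation_natural_general f hf μ fd hfd φ hφ
end

section
/- (Bayesian inversion commutes with approximation) Let X, Y, X', Y' be nonempty standard Borel spaces, f : X ⇸ Y a Markov kernel, μ a probability measure on X, ν = μ.bind f, and let p : X → X' and q : Y → Y' be measurable maps. Let f† be a Bayesian inverse of f with respect to μ, let p†_μ : X' ⇸ X be a Bayesian inverse of the deterministic kernel δ_p with respect to μ, and let q†_ν : Y' ⇸ Y be a Bayesian inverse of δ_q with respect to ν. Define the approximation f^{p,q} := q†_ν ∘ δ_q ∘ f ∘ p†_μ ∘ δ_p : X ⇸ Y. Then μ.bind f^{p,q} = ν, and the kernel (f†)^{q,p} := p†_μ ∘ δ_p ∘ f† ∘ q†_ν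 ∘ δ_q : Y ⇸ X is a Bayesian inverse of f^{p,q} with respect to μ. -/
open MeasureTheory

/-!
Write `f ; g` for the kernel `x ↦ (f x).bind g`. The defining identity of a Bayesian inverse says
`(μ|_A).bind f = (μ.bind f).withDensity (g · A)`; integrating against it for both factors shows
that the Bayesian inverse of a composite is the composite of the Bayesian inverses in reverse
order. As `f` is in turn a Bayesian inverse of `g` with respect to `μ.bind f`, the inverse of
`f^{p,q} = δ_p ; p† ; f ; δ_q ; q†` is `δ_q ; q† ; f† ; δ_p ; p† = (f†)^{q,p}`.
-/

open scoped ENNReal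

namespace IsBayesInv

open Measure

variable {X Y Z : Type*} [MeasurableSpace X] [MeasurableSpace Y] [MeasurableSpace Z]
  {μ : Measure X} {f : X → Measure Y} {g : Y → Measure X}

theorem bind_restrict_eq_withDensity (h : IsBayesInv μ f g) (hf : Measurable f)
    {A : Set X} (hA : MeasurableSet A) :
    (μ.restrict A).bind f = (μ.bind f).withDensity (fun y => g y A) := by
  ext B hB
  rw [bind_apply hB hf.aemeasurable, withDensity_apply _ hB]
  exact h.2.2.2 A B hA hB

theorem setLIntegral_lintegral_eq (h : IsBayesInv μ f g) (hf : Measurable f)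
    {A : Set X} (hA : MeasurableSet A) {φ : Y → ℝ≥0∞} (hφ : Measurable φ) :
    ∫⁻ x in A, ∫⁻ y, φ y ∂f x ∂μ = ∫⁻ y, g y A * φ y ∂μ.bind f := by
  rw [← lintegral_bind hf.aemeasurable hφ.aemeasurable, h.bind_restrict_eq_withDensity hf hA,
    lintegral_withDensity_eq_lintegral_mul _ (measurable_measure.1 h.1 A hA) hφ]
  rfl

theorem bind_comp_eq (h : IsBayesInv μ f g) (hf : Measurable f) :
    μ.bind (fun x => (f x).bind g) = μ := by
  rw [← bind_bind hf.aemeasurable h.1.aemeasurable]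
  exact h.2.2.1

theorem symm (h : IsBayesInv μ f g) (hf : Measurable f)
    (hfP : ∀ x, IsProbabilityMeasure (f x)) : IsBayesInv (μ.bind f) g f := by
  obtain ⟨-, -, hbind, hsymm⟩ := h
  refine ⟨hf, hfP, by rw [hbind], fun B A hB hA => ?_⟩
  rw [hbind]
  exact (hsymm A B hA hB).symm

theorem comp {ν : Measure Y} {f₂ : Y → Measure Z} {g₂ : Z → Measure Y}
    (h : IsBayesInv μ f g) (hf : Measurable f) (hν : μ.bind f = ν)
    (h₂ : IsBayesInv ν f₂ g₂) (hf₂ : Measurable f₂) (hf₂P : ∀ y, IsProbabilityMeasure (f₂ y)) :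
    IsBayesInv μ (fun x => (f x).bind f₂) (fun z => (g₂ z).bind g) := by
  subst hν
  have hbind : μ.bind (fun x => (f x).bind f₂) = (μ.bind f).bind f₂ :=
    (bind_bind hf.aemeasurable hf₂.aemeasurable).symm
  refine ⟨(measurable_bind' h.1).comp h₂.1, fun z => ?_, ?_, fun A C hA hC => ?_⟩
  · have := h₂.2.1 z
    exact isProbabilityMeasure_bind h.1.aemeasurable (ae_of_all _ h.2.1)
  · rw [hbind, ← bind_bind h₂.1.aemeasurable h.1.aemeasurable, h₂.2.2.1, h.2.2.1]
  · -- both sides reduce to `∫⁻ y, g y A * f₂ y C ∂μ.bind f`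
    simp_rw [hbind, bind_apply hC hf₂.aemeasurable, bind_apply hA h.1.aemeasurable]
    rw [h.setLIntegral_lintegral_eq hf hA (measurable_measure.1 hf₂ C hC),
      (h₂.symm hf₂ hf₂P).setLIntegral_lintegral_eq h₂.1 hC (measurable_measure.1 h.1 A hA),
      h₂.2.2.1]
    simp_rw [mul_comm]

end IsBayesInv

theorem bayesian_inverse_commutes_with_approximation_general
    {X Y X' Y' : Type*}
    [MeasurableSpace X] [MeasurableSpace Y] [MeasurableSpace X'] [MeasurableSpace Y']
    (f : X → Measure Y) (hf : Measurable f) (hfP : ∀ x, IsProbabilityMeasure (f x))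
    (μ : Measure X)
    (p : X → X') (hp : Measurable p) (q : Y → Y') (hq : Measurable q)
    (fd : Y → Measure X) (hfd : IsBayesInv μ f fd)
    (pd : X' → Measure X)
    (hpd : IsBayesInv μ (fun x => Measure.dirac (p x)) pd)
    (qd : Y' → Measure Y)
    (hqd : IsBayesInv (μ.bind f) (fun y => Measure.dirac (q y)) qd) :
    μ.bind (fun x =>
        ((((Measure.dirac (p x)).bind pd).bind f).bind
          (fun y => Measure.dirac (q y))).bind qd) = μ.bind f ∧
    IsBayesInv μ
      (fun x =>
        ((((Measure.dirac (p x)).bind pd).bind f).bind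
          (fun y => Measure.dirac (q y))).bind qd)
      (fun y =>
        ((((Measure.dirac (q y)).bind qd).bind fd).bind
          (fun x => Measure.dirac (p x))).bind pd) := by
  open Measure in
  have hpdm := hpd.1
  have hqdm := hqd.1
  have hfdm := hfd.1
  have hδp : Measurable fun x => dirac (p x) := measurable_dirac.comp hp
  have hδq : Measurable fun y => dirac (q y) := measurable_dirac.comp hq
  have hK₁ : Measurable fun x => (dirac (p x)).bind pd := by fun_prop
  have hK₂ : Measurable fun x => ((dirac (p x)).bind pd).bind f := by fun_prop
  have hK₃ : Measurable fun x => (((dirac (p x)).bind pd).bind f).bind (fun y => dirac (q y)) :=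
    by fun_prop
  have e₁ : μ.bind (fun x => (dirac (p x)).bind pd) = μ := hpd.bind_comp_eq hδp
  have e₂ : μ.bind (fun x => ((dirac (p x)).bind pd).bind f) = μ.bind f := by
    rw [← bind_bind hK₁.aemeasurable hf.aemeasurable, e₁]
  have e₃ : μ.bind (fun x => (((dirac (p x)).bind pd).bind f).bind (fun y => dirac (q y))) =
      (μ.bind f).bind (fun y => dirac (q y)) := by
    rw [← bind_bind hK₂.aemeasurable hδq.aemeasurable, e₂]
  have inv₁ : IsBayesInv μ (fun x => (dirac (p x)).bind pd) (fun x => (dirac (p x)).bind pd) :=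
    hpd.comp hδp rfl (hpd.symm hδp fun _ => inferInstance) hpdm hpd.2.1
  have inv₂ := inv₁.comp hK₁ e₁ hfd hf hfP
  have inv₃ := inv₂.comp hK₂ e₂ hqd hδq fun _ => inferInstance
  have inv₄ := inv₃.comp hK₃ e₃ (hqd.symm hδq fun _ => inferInstance) hqdm hqd.2.1
  refine ⟨by rw [← bind_bind hK₃.aemeasurable hqdm.aemeasurable, e₃, hqd.2.2.1], ?_⟩
  convert inv₄ using 2 with y
  rw [bind_bind hδp.aemeasurable hpdm.aemeasurable, bind_bind hfdm.aemeasurable hK₁.aemeasurable,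
    bind_bind hqdm.aemeasurable (by fun_prop)]

/-- Bayesian inversion commutes with approximation along quotient maps `p`, `q`:
the approximation `f^{p,q}` preserves the pushforward measure, and the
approximation `(f†)^{q,p}` of the Bayesian inverse is a Bayesian inverse of
`f^{p,q}`. -/
theorem bayesian_inverse_commutes_with_approximation
    {X Y X' Y' : Type*}
    [MeasurableSpace X] [StandardBorelSpace X] [Nonempty X]
    [MeasurableSpace Y] [StandardBorelSpace Y] [Nonempty Y]
    [MeasurableSpace X'] [StandardBorelSpace X'] [Nonempty X']
    [MeasurableSpace Y'] [StandardBorelSpace Y'] [Nonempty Y']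
    (f : X → Measure Y) (hf : Measurable f) (hfP : ∀ x, IsProbabilityMeasure (f x))
    (μ : Measure X) [IsProbabilityMeasure μ]
    (p : X → X') (hp : Measurable p) (q : Y → Y') (hq : Measurable q)
    (fd : Y → Measure X) (hfd : IsBayesInv μ f fd)
    (pd : X' → Measure X)
    (hpd : IsBayesInv μ (fun x => Measure.dirac (p x)) pd)
    (qd : Y' → Measure Y)
    (hqd : IsBayesInv (μ.bind f) (fun y => Measure.dirac (q y)) qd) :
    μ.bind (fun x =>
        ((((Measure.dirac (p x)).bind pd).bind f).bind
          (fun y => Measure.dirac (q y))).bind qd) = μ.bind f ∧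
    IsBayesInv μ
      (fun x =>
        ((((Measure.dirac (p x)).bind pd).bind f).bind
          (fun y => Measure.dirac (q y))).bind qd)
      (fun y =>
        ((((Measure.dirac (q y)).bind qd).bind fd).bind
          (fun x => Measure.dirac (p x))).bind pd) :=
  bayesian_inverse_commutes_with_approximation_general f hf hfP μ p hp q hq fd hfd pd hpd qd hqd
end

section
/- (Compositionality of approximations along hemi-bisimulations) Let X, Y, Z, X', Y', Z' be nonempty standard Borel spaces, μ a probability measure on X, f : X ⇸ Y and g : Y ⇸ Z Markov kernels, ν = μ.bind f and ρ = ν.bind g. Let p : X → X', q : Y → Y', r : Z → Z' be measurable maps, and let p†_μ, q†_ν, r†_ρ be Bayesian inverses of the deterministic kernels δ_p, δ_q, δ_r with respect to μ, ν, ρ respectively. Define f^{p,q} := q†_ν ∘ δ_q ∘ f ∘ p†_μ ∘ δ_p and g^{q,r} := r†_ρ ∘ δ_r ∘ g ∘ q†_ν ∘ δ_q and (g ∘ f)^{p,r} := r†_ρ ∘ δ_r ∘ g ∘ f ∘ p†_μ ∘ δ_p. If q is a left hemi-bisimulation for f, i.e. (q†_ν ∘ δ_q ∘ f)(x) = f(x)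 for μ-almost every x, then (g ∘ f)^{p,r}(x) = (g^{q,r} ∘ f^{p,q})(x) for μ-almost every x ∈ X. -/
/-!
Let `L := q†_ν ∘ δ_q`, a kernel on `Y`. Testing the Bayes equation of `q†_ν` on `q⁻¹ Bᶜ × B`
for `B` in a countable separating family of `Y'` shows that `q†_ν y'` lives on the fibre
`q⁻¹ {y'}` for almost every `y'`; hence `L ∘ L = L` holds `ν`-almost everywhere, while the
hemi-bisimulation hypothesis says `L ∘ f = f`. With `K := r†_ρ ∘ δ_r ∘ g`, the two sides of the
theorem at `x` are `K ∘ f` and `K ∘ L ∘ L ∘ f` applied to `p†_μ (p x)`, and both facts about `L`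
pass from `μ`-almost every point to `p†_μ (p x)`-almost every point because `p†_μ ∘ δ_p`
preserves `μ`.
-/

open MeasureTheory

namespace MeasureTheory.Measure

variable {α β γ : Type*} [MeasurableSpace α] [MeasurableSpace β] [MeasurableSpace γ]

lemma bind_dirac_comp_bind (ξ : Measure α) {q : α → β} (hq : Measurable q)
    {k : β → Measure γ} (hk : Measurable k) :
    (ξ.bind fun a => dirac (q a)).bind k = ξ.bind fun a => k (q a) := by
  rw [bind_bind (f := fun a => dirac (q a)) (measurable_dirac.comp hq).aemeasurable
    hk.aemeasurable]
  simp only [dirac_bind hk]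

lemma bind_bind_bind_of_idempotent (κ : Measure α) {L : α → Measure α} (hL : Measurable L)
    {K : α → Measure β} (hK : Measurable K) (hinv : κ.bind L = κ)
    (hidem : ∀ᵐ a ∂κ, (L a).bind L = L a) :
    (κ.bind L).bind (fun a => (L a).bind K) = κ.bind K := by
  calc (κ.bind L).bind (fun a => (L a).bind K)
      = κ.bind (fun a => ((L a).bind L).bind K) := by
        rw [bind_bind (g := fun a => (L a).bind K) hL.aemeasurable
          ((measurable_bind' hK).comp hL).aemeasurable]
        simp only [bind_bind hL.aemeasurable hK.aemeasurable]
    _ = κ.bind (fun a => (L a).bind K) :=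
        bind_congr_right (hidem.mono fun a h => by simp only [h])
    _ = κ.bind K := by rw [← bind_bind hL.aemeasurable hK.aemeasurable, hinv]

end MeasureTheory.Measure

namespace IsBayesInv

open Measure

variable {X Y : Type*} [MeasurableSpace X] [MeasurableSpace Y]

lemma bind_comp_eq_self {μ : Measure X} {p : X → Y} (hp : Measurable p) {pd : Y → Measure X}
    (hpd : IsBayesInv μ (fun x => dirac (p x)) pd) :
    μ.bind (fun x => pd (p x)) = μ := by
  rw [← bind_dirac_comp_bind μ hp hpd.1]
  exact hpd.2.2.1

variable {ν : Measure X} {q : X → Y} {qd : Y → Measure X}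

lemma ae_ae_mem_of_mem (hq : Measurable q) (hqd : IsBayesInv ν (fun x => dirac (q x)) qd)
    {B : Set Y} (hB : MeasurableSet B) :
    ∀ᵐ y ∂ν.bind (fun x => dirac (q x)), y ∈ B → ∀ᵐ x ∂qd y, q x ∈ B := by
  have hzero : ∫⁻ y in B, qd y (q ⁻¹' Bᶜ) ∂ν.bind (fun x => dirac (q x)) = 0 := by
    rw [← hqd.2.2.2 _ _ (hq hB.compl) hB]
    refine (setLIntegral_congr_fun (hq hB.compl) fun x hx => ?_).trans lintegral_zero
    simp_all [dirac_apply' _ hB]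
  rw [lintegral_eq_zero_iff (f := fun y => qd y (q ⁻¹' Bᶜ))
      ((measurable_coe (hq hB.compl)).comp hqd.1),
    Filter.EventuallyEq, ae_restrict_iff' hB] at hzero
  filter_upwards [hzero] with y hy hyB
  exact ae_iff.2 (hy hyB)

lemma ae_ae_mem_iff (hq : Measurable q) (hqd : IsBayesInv ν (fun x => dirac (q x)) qd)
    {B : Set Y} (hB : MeasurableSet B) :
    ∀ᵐ y ∂ν.bind (fun x => dirac (q x)), ∀ᵐ x ∂qd y, (q x ∈ B ↔ y ∈ B) := by
  filter_upwards [ae_ae_mem_of_mem hq hqd hB, ae_ae_mem_of_mem hq hqd hB.compl] with y hin hout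
  by_cases hy : y ∈ B
  · filter_upwards [hin hy] with x hx using iff_of_true hx hy
  · filter_upwards [hout hy] with x hx using iff_of_false hx hy

lemma ae_ae_eq [MeasurableSpace.CountablySeparated Y] (hq : Measurable q)
    (hqd : IsBayesInv ν (fun x => dirac (q x)) qd) :
    ∀ᵐ y ∂ν.bind (fun x => dirac (q x)), ∀ᵐ x ∂qd y, q x = y := by
  obtain ⟨S, hSm, hsep⟩ := exists_seq_separating Y MeasurableSet.empty Set.univ
  filter_upwards [ae_all_iff.2 fun n => ae_ae_mem_iff hq hqd (hSm n)] with y hy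
  filter_upwards [ae_all_iff.2 hy] with x hx using hsep _ trivial _ trivial hx

lemma ae_bind_comp_idempotent [MeasurableSpace.CountablySeparated Y] (hq : Measurable q)
    (hqd : IsBayesInv ν (fun x => dirac (q x)) qd) :
    ∀ᵐ x ∂ν, (qd (q x)).bind (fun x' => qd (q x')) = qd (q x) := by
  have hfib := hqd.ae_ae_eq hq
  rw [bind_dirac_eq_map _ hq] at hfib
  filter_upwards [ae_of_ae_map hq.aemeasurable hfib] with x hx
  have := hqd.2.1 (q x)
  rw [bind_congr_right (hx.mono fun x' h => congrArg qd h), bind_const, measure_univ, one_smul]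

end IsBayesInv

open Measure in
theorem approximation_compositional_general
    {X Y Z X' Y' Z' : Type*}
    [MeasurableSpace X] [MeasurableSpace Y] [MeasurableSpace Z]
    [MeasurableSpace X'] [MeasurableSpace Y'] [StandardBorelSpace Y'] [MeasurableSpace Z']
    (μ : Measure X)
    (f : X → Measure Y) (hf : Measurable f)
    (g : Y → Measure Z) (hg : Measurable g)
    (p : X → X') (hp : Measurable p)
    (q : Y → Y') (hq : Measurable q)
    (r : Z → Z') (hr : Measurable r)
    (pd : X' → Measure X)
    (hpd : IsBayesInv μ (fun x => Measure.dirac (p x)) pd)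
    (qd : Y' → Measure Y)
    (hqd : IsBayesInv (μ.bind f) (fun y => Measure.dirac (q y)) qd)
    (rd : Z' → Measure Z)
    (hrd : IsBayesInv ((μ.bind f).bind g) (fun z => Measure.dirac (r z)) rd)
    (hhemi : ∀ᵐ x ∂μ, ((f x).bind (fun y => Measure.dirac (q y))).bind qd = f x) :
    ∀ᵐ x ∂μ,
      (((((Measure.dirac (p x)).bind pd).bind f).bind g).bind
          (fun z => Measure.dirac (r z))).bind rd
      = (((((Measure.dirac (p x)).bind pd).bind f).bind
            (fun y => Measure.dirac (q y))).bind qd).bind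
          (fun y =>
            ((((Measure.dirac (q y)).bind qd).bind g).bind
                (fun z => Measure.dirac (r z))).bind rd) := by
  set L : Y → Measure Y := fun y => qd (q y)
  have hL : Measurable L := hqd.1.comp hq
  set K : Y → Measure Z := fun y => ((g y).bind fun z => dirac (r z)).bind rd
  have hδr : Measurable fun z => dirac (r z) := measurable_dirac.comp hr
  have hgr : Measurable fun y => (g y).bind fun z => dirac (r z) := (measurable_bind' hδr).comp hg
  have hK : Measurable K := (measurable_bind' hrd.1).comp hgr
  have hassoc : ∀ ξ : Measure Y, ((ξ.bind g).bind fun z => dirac (r z)).bind rd = ξ.bind K :=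
    fun ξ => by
      rw [bind_bind hg.aemeasurable hδr.aemeasurable, bind_bind hgr.aemeasurable hrd.1.aemeasurable]
  have hpdp : Measurable fun x => pd (p x) := hpd.1.comp hp
  have hμ := hpd.bind_comp_eq_self hp
  have hν : μ.bind (fun x => (pd (p x)).bind f) = μ.bind f := by
    rw [← bind_bind hpdp.aemeasurable hf.aemeasurable, hμ]
  have hinv : ∀ᵐ x ∂μ, ∀ᵐ x' ∂pd (p x), (f x').bind L = f x' := by
    refine ae_ae_of_ae_bind hpdp.aemeasurable ?_
    rw [hμ]
    simpa only [bind_dirac_comp_bind _ hq hqd.1] using hhemi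
  have hidem : ∀ᵐ x ∂μ, ∀ᵐ y ∂(pd (p x)).bind f, (L y).bind L = L y := by
    refine ae_ae_of_ae_bind ((measurable_bind' hf).comp hpdp).aemeasurable ?_
    rw [hν]
    exact hqd.ae_bind_comp_idempotent (qd := qd) hq
  filter_upwards [hinv, hidem] with x hinvx hidemx
  simp only [dirac_bind hpd.1, dirac_bind hqd.1, hassoc, bind_dirac_comp_bind _ hq hqd.1]
  exact (bind_bind_bind_of_idempotent _ hL hK
    ((bind_bind hf.aemeasurable hL.aemeasurable).trans (bind_congr_right hinvx)) hidemx).symm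

/-- Compositionality of approximations along a left hemi-bisimulation:
if `q†_ν ∘ δ_q ∘ f = f` (μ-a.e.), then `(g ∘ f)^{p,r} = g^{q,r} ∘ f^{p,q}` (μ-a.e.). -/
theorem approximation_compositional
    {X Y Z X' Y' Z' : Type*}
    [MeasurableSpace X] [StandardBorelSpace X] [Nonempty X]
    [MeasurableSpace Y] [StandardBorelSpace Y] [Nonempty Y]
    [MeasurableSpace Z] [StandardBorelSpace Z] [Nonempty Z]
    [MeasurableSpace X'] [StandardBorelSpace X'] [Nonempty X']
    [MeasurableSpace Y'] [StandardBorelSpace Y'] [Nonempty Y']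
    [MeasurableSpace Z'] [StandardBorelSpace Z'] [Nonempty Z']
    (μ : Measure X) [IsProbabilityMeasure μ]
    (f : X → Measure Y) (hf : Measurable f) (hfP : ∀ x, IsProbabilityMeasure (f x))
    (g : Y → Measure Z) (hg : Measurable g) (hgP : ∀ y, IsProbabilityMeasure (g y))
    (p : X → X') (hp : Measurable p)
    (q : Y → Y') (hq : Measurable q)
    (r : Z → Z') (hr : Measurable r)
    (pd : X' → Measure X)
    (hpd : IsBayesInv μ (fun x => Measure.dirac (p x)) pd)
    (qd : Y' → Measure Y)
    (hqd : IsBayesInv (μ.bind f) (fun y => Measure.dirac (q y)) qd)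
    (rd : Z' → Measure Z)
    (hrd : IsBayesInv ((μ.bind f).bind g) (fun z => Measure.dirac (r z)) rd)
    (hhemi : ∀ᵐ x ∂μ, ((f x).bind (fun y => Measure.dirac (q y))).bind qd = f x) :
    ∀ᵐ x ∂μ,
      (((((Measure.dirac (p x)).bind pd).bind f).bind g).bind
          (fun z => Measure.dirac (r z))).bind rd
      = (((((Measure.dirac (p x)).bind pd).bind f).bind
            (fun y => Measure.dirac (q y))).bind qd).bind
          (fun y =>
            ((((Measure.dirac (q y)).bind qd).bind g).bind
                (fun z => Measure.dirac (r z))).bind rd) :=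
  approximation_compositional_general μ f hf g hg p hp q hq r hr pd hpd qd hqd rd hrd hhemi
end

section
/- (Approximation is non-expansive) Let X, Y, X' be nonempty standard Borel spaces, f : X ⇸ Y a Markov kernel, μ a probability measure on X, ν = μ.bind f, q : X → X' a measurable map, and q†_μ : X' ⇸ X a Bayesian inverse of the deterministic kernel δ_q with respect to μ. Define f^q := f ∘ q†_μ ∘ δ_q : X ⇸ Y. Then for every p ∈ [1, ∞] and every measurable φ : Y → ℝ with finite L^p(ν)-norm, the L^p(μ)-norm of x ↦ ∫_Y φ d(f^q x) is at most the L^p(μ)-norm of x ↦ ∫_Y φ d(f x). -/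
/-!
Write `κ x := q†_μ (q x)` and `ψ x := ∫ φ d(f x)`. Since `q†_μ` is a Bayesian inverse of `δ_q`,
`μ` is `κ`-invariant, and `f^q x = (f ∘ κ) x`, so the approximated predicate transformer is
`x ↦ ∫ ψ d(κ x)` (μ-a.e.; `φ ∈ L¹(ν)` makes this integral manipulation legitimate). Averaging
against a Markov kernel is an `L^p` contraction from `L^p(κ ∘ μ)` to `L^p(μ)`: pointwise
`‖∫ ψ d(κ x)‖ ≤ ‖ψ‖_{L^p(κ x)}` by Jensen, and integrating the `p`-th power over `μ` (or taking
the essential supremum when `p = ∞`) gives `‖ψ‖_{L^p(κ ∘ μ)} = ‖ψ‖_{L^p(μ)}`.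
-/

open MeasureTheory

open ProbabilityTheory

namespace MeasureTheory

variable {α β E : Type*} [MeasurableSpace α] [MeasurableSpace β]
  [NormedAddCommGroup E] {μ : Measure α} {κ : Kernel α β} {ψ : β → E} {p : ENNReal}

lemma enorm_integral_le_eLpNorm [NormedSpace ℝ E] {ν : Measure β} [IsProbabilityMeasure ν]
    (hψ : AEStronglyMeasurable ψ ν) (hp : 1 ≤ p) : ‖∫ y, ψ y ∂ν‖ₑ ≤ eLpNorm ψ p ν :=
  calc ‖∫ y, ψ y ∂ν‖ₑ ≤ ∫⁻ y, ‖ψ y‖ₑ ∂ν := enorm_integral_le_lintegral_enorm ψ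
    _ = eLpNorm ψ 1 ν := eLpNorm_one_eq_lintegral_enorm.symm
    _ ≤ eLpNorm ψ p ν := eLpNorm_le_eLpNorm_of_exponent_le hp hψ

lemma eLpNorm_bind_of_ne_top (hp0 : p ≠ 0) (hp : p ≠ ⊤) (hψ : AEStronglyMeasurable ψ (κ ∘ₘ μ)) :
    eLpNorm ψ p (κ ∘ₘ μ) = eLpNorm (fun x ↦ eLpNorm ψ p (κ x)) p μ := by
  have hr : p.toReal ≠ 0 := ENNReal.toReal_ne_zero.2 ⟨hp0, hp⟩
  simp only [eLpNorm_eq_lintegral_rpow_enorm_toReal hp0 hp, enorm_eq_self]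
  rw [Measure.lintegral_bind κ.aemeasurable (hψ.enorm.pow_const _)]
  simp only [← ENNReal.rpow_mul, one_div_mul_cancel hr, ENNReal.rpow_one]

lemma ae_eLpNormEssSup_le_eLpNormEssSup_bind :
    ∀ᵐ x ∂μ, eLpNormEssSup ψ (κ x) ≤ eLpNormEssSup ψ (κ ∘ₘ μ) := by
  filter_upwards [Measure.ae_ae_of_ae_comp (ae_le_eLpNormEssSup (f := ψ))] with x hx
  exact eLpNormEssSup_le_of_ae_enorm_bound hx

lemma eLpNorm_eLpNorm_le_eLpNorm_bind (hψ : AEStronglyMeasurable ψ (κ ∘ₘ μ)) :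
    eLpNorm (fun x ↦ eLpNorm ψ p (κ x)) p μ ≤ eLpNorm ψ p (κ ∘ₘ μ) := by
  rcases eq_or_ne p 0 with rfl | hp0
  · simp
  rcases eq_or_ne p ⊤ with rfl | hp
  · simp only [eLpNorm_exponent_top]
    refine eLpNormEssSup_le_of_ae_enorm_bound ?_
    simpa only [enorm_eq_self] using ae_eLpNormEssSup_le_eLpNormEssSup_bind
  · exact (eLpNorm_bind_of_ne_top hp0 hp hψ).ge

lemma eLpNorm_integral_le_eLpNorm_bind [NormedSpace ℝ E] [IsMarkovKernel κ]
    (hψ : StronglyMeasurable ψ) (hp : 1 ≤ p) :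
    eLpNorm (fun x ↦ ∫ y, ψ y ∂κ x) p μ ≤ eLpNorm ψ p (κ ∘ₘ μ) :=
  calc eLpNorm (fun x ↦ ∫ y, ψ y ∂κ x) p μ ≤ eLpNorm (fun x ↦ eLpNorm ψ p (κ x)) p μ :=
        eLpNorm_mono_enorm fun _ ↦
          (enorm_integral_le_eLpNorm hψ.aestronglyMeasurable hp).trans_eq (enorm_eq_self _).symm
    _ ≤ eLpNorm ψ p (κ ∘ₘ μ) := eLpNorm_eLpNorm_le_eLpNorm_bind hψ.aestronglyMeasurable

lemma ae_integral_comp_eq_integral_integral [NormedSpace ℝ E] {γ : Type*} [MeasurableSpace γ]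
    {η : Kernel β γ} {φ : γ → E} (hφ : Integrable φ (η ∘ₘ (κ ∘ₘ μ))) :
    ∀ᵐ x ∂μ, ∫ z, φ z ∂(η ∘ₖ κ) x = ∫ y, ∫ z, φ z ∂η y ∂κ x := by
  rw [Measure.comp_assoc] at hφ
  filter_upwards [Measure.ae_integrable_of_integrable_comp hφ] with x hx
  exact Kernel.integral_comp hx

end MeasureTheory

lemma IsBayesInv.bind_bind_eq_self {X Y : Type*} [MeasurableSpace X] [MeasurableSpace Y]
    {μ : Measure X} {f : X → Measure Y} {g : Y → Measure X} (hg : IsBayesInv μ f g)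
    (hf : Measurable f) : μ.bind (fun x ↦ (f x).bind g) = μ := by
  rw [← Measure.bind_bind hf.aemeasurable hg.1.aemeasurable]
  exact hg.2.2.1

theorem approximation_nonexpansive_general
    {X Y X' : Type*}
    [MeasurableSpace X]
    [MeasurableSpace Y]
    [MeasurableSpace X']
    (f : X → Measure Y) (hf : Measurable f) (hfP : ∀ x, IsProbabilityMeasure (f x))
    (μ : Measure X) [IsProbabilityMeasure μ]
    (q : X → X') (hq : Measurable q)
    (qd : X' → Measure X)
    (hqd : IsBayesInv μ (fun x => Measure.dirac (q x)) qd) :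
    ∀ p : ENNReal, 1 ≤ p → ∀ φ : Y → ℝ, Measurable φ →
      eLpNorm φ p (μ.bind f) < ⊤ →
      eLpNorm (fun x => ∫ y, φ y ∂(((Measure.dirac (q x)).bind qd).bind f)) p μ
        ≤ eLpNorm (fun x => ∫ y, φ y ∂(f x)) p μ := by
  intro p hp φ hφ hφp
  have hqdm : Measurable qd := hqd.1
  let fK : Kernel X Y := ⟨f, hf⟩
  have : IsMarkovKernel fK := ⟨hfP⟩
  let κ : Kernel X X := ⟨fun x ↦ qd (q x), hqdm.comp hq⟩
  have : IsMarkovKernel κ := ⟨fun x ↦ hqd.2.1 (q x)⟩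
  have hκμ : κ ∘ₘ μ = μ := by
    have h := hqd.bind_bind_eq_self (Measure.measurable_dirac.comp hq)
    simp only [Measure.dirac_bind hqdm] at h
    exact h
  have hφ1 : Integrable φ (fK ∘ₘ (κ ∘ₘ μ)) := by
    rw [hκμ]; exact MemLp.integrable hp ⟨hφ.aestronglyMeasurable, hφp⟩
  have hfq : ∀ x, ((Measure.dirac (q x)).bind qd).bind f = (fK ∘ₖ κ) x := fun x ↦ by
    rw [Measure.dirac_bind hqdm, Kernel.comp_apply]; rfl
  calc eLpNorm (fun x ↦ ∫ y, φ y ∂(((Measure.dirac (q x)).bind qd).bind f)) p μ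
      = eLpNorm (fun x ↦ ∫ x', ∫ y, φ y ∂fK x' ∂κ x) p μ := by
        simp only [hfq]; exact eLpNorm_congr_ae (ae_integral_comp_eq_integral_integral hφ1)
    _ ≤ eLpNorm (fun x ↦ ∫ y, φ y ∂f x) p (κ ∘ₘ μ) :=
        eLpNorm_integral_le_eLpNorm_bind hφ.stronglyMeasurable.integral_kernel hp
    _ = eLpNorm (fun x ↦ ∫ y, φ y ∂f x) p μ := by rw [hκμ]

/-- Approximation is non-expansive: the predicate transformer of the
approximated kernel `f^q = f ∘ q†_μ ∘ δ_q` has `L^p` norms bounded by those of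
the original kernel. -/
theorem approximation_nonexpansive
    {X Y X' : Type*}
    [MeasurableSpace X] [StandardBorelSpace X] [Nonempty X]
    [MeasurableSpace Y] [StandardBorelSpace Y] [Nonempty Y]
    [MeasurableSpace X'] [StandardBorelSpace X'] [Nonempty X']
    (f : X → Measure Y) (hf : Measurable f) (hfP : ∀ x, IsProbabilityMeasure (f x))
    (μ : Measure X) [IsProbabilityMeasure μ]
    (q : X → X') (hq : Measurable q)
    (qd : X' → Measure X)
    (hqd : IsBayesInv μ (fun x => Measure.dirac (q x)) qd) :
    ∀ p : ENNReal, 1 ≤ p → ∀ φ : Y → ℝ, Measurable φ →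
      eLpNorm φ p (μ.bind f) < ⊤ →
      eLpNorm (fun x => ∫ y, φ y ∂(((Measure.dirac (q x)).bind qd).bind f)) p μ
        ≤ eLpNorm (fun x => ∫ y, φ y ∂(f x)) p μ :=
  approximation_nonexpansive_general f hf hfP μ q hq qd hqd
end

section
/- (Lévy lemma for kernel approximations) Let X be a nonempty standard Borel space with Borel σ-algebra ℬ_X, μ a probability measure on X, Y a measurable space, and f : X ⇸ Y a Markov kernel. Let (X_n) be finite measurable spaces (with the discrete σ-algebra) and p_n : X → X_n measurable maps such that the σ-algebras σ(p_n) = p_n⁻¹(𝒫(X_n)) are increasing in n and ℬ_X = σ(⋃_n σ(p_n)). For each n let p_n† : X_n ⇸ X be a Bayesian inverse of the deterministic kernel δ_{p_n} with respect to μ, and set fⁿ := f ∘ p_n† ∘ δ_{p_n} : X ⇸ Y. Then for every measurable set A ⊆ Y: (i) fⁿ(x)(A) → f(x)(A) as n → ∞ for μ-almost every x ∈ X, and (ii) ∫_X |fⁿ(x)(A) − f(x)(A)| dμ(x) → 0 as n → ∞. -/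
/-!
Since `(δ_{pₙ} x).bind pₙ† = pₙ†(pₙ x)`, the approximation is
`fⁿ(x)(A) = ∫ f(z)(A) d(pₙ†(pₙ x))(z)`. The defining identity of the Bayesian inverse of `δ_{pₙ}`
says that `(pₙ_* μ)|_B` pushed through `pₙ†` is `μ|_{pₙ⁻¹ B}`, so `fⁿ(·)(A)` has the same
integrals as `f(·)(A)` over every `σ(pₙ)`-measurable set: it is a version of the conditional
expectation `𝔼[f(·)(A) | σ(pₙ)]`. As the `σ(pₙ)` increase to the full σ-algebra, Lévy's upward
theorem gives almost-everywhere convergence, and dominated convergence (all values lie in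
`[0, 1]`) gives convergence in `L¹`.
-/

open MeasureTheory Filter Topology

open scoped ENNReal

section

variable {Ω : Type*} {m0 : MeasurableSpace Ω} {μ : Measure Ω} [IsFiniteMeasure μ]

theorem integrable_toReal_of_le {k : Ω → ℝ≥0∞} (hk : AEMeasurable k μ) {C : ℝ≥0∞}
    (hC : C ≠ ∞) (hkC : ∀ x, k x ≤ C) : Integrable (fun x => (k x).toReal) μ :=
  .of_bound hk.ennreal_toReal.aestronglyMeasurable C.toReal
    (ae_of_all _ fun x => by simpa using ENNReal.toReal_mono hC (hkC x))

theorem tendsto_ae_condExp_of_iSup_eq {ℱ : ℕ → MeasurableSpace Ω} (hmono : Monotone ℱ)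
    (hgen : ⨆ n, ℱ n = m0) {g : Ω → ℝ} (hg : Integrable g μ) (hgm : StronglyMeasurable g) :
    ∀ᵐ x ∂μ, Tendsto (fun n => (μ[g | ℱ n]) x) atTop (𝓝 (g x)) := by
  let 𝒢 : Filtration ℕ m0 := ⟨ℱ, hmono, fun n => hgen ▸ le_iSup ℱ n⟩
  have hgm' : StronglyMeasurable[⨆ n, 𝒢 n] g := by
    change StronglyMeasurable[⨆ n, ℱ n] g
    rwa [hgen]
  exact hg.tendsto_ae_condExp hgm'

theorem tendsto_integral_abs_toReal_sub_of_tendsto_ae {F : ℕ → Ω → ℝ≥0∞} {g : Ω → ℝ≥0∞}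
    {C : ℝ≥0∞} (hC : C ≠ ∞) (hF : ∀ n, AEMeasurable (F n) μ) (hg : AEMeasurable g μ)
    (hFC : ∀ n x, F n x ≤ C) (hgC : ∀ x, g x ≤ C)
    (hlim : ∀ᵐ x ∂μ, Tendsto (fun n => F n x) atTop (𝓝 (g x))) :
    Tendsto (fun n => ∫ x, |(F n x).toReal - (g x).toReal| ∂μ) atTop (𝓝 0) := by
  have hbound : ∀ n x, ‖|(F n x).toReal - (g x).toReal|‖ ≤ C.toReal := fun n x => by
    rw [norm_abs_eq_norm, Real.norm_eq_abs]
    exact abs_sub_le_of_nonneg_of_le ENNReal.toReal_nonneg (ENNReal.toReal_mono hC (hFC n x))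
      ENNReal.toReal_nonneg (ENNReal.toReal_mono hC (hgC x))
  have hlim_toReal : ∀ᵐ x ∂μ,
      Tendsto (fun n => |(F n x).toReal - (g x).toReal|) atTop (𝓝 0) :=
    hlim.mono fun x hx => by
      simpa using (((ENNReal.tendsto_toReal (ne_top_of_le_ne_top hC (hgC x))).comp hx).sub_const
        (g x).toReal).abs
  simpa using tendsto_integral_of_dominated_convergence (f := fun _ => 0) (fun _ => C.toReal)
    (fun n => ((hF n).ennreal_toReal.sub hg.ennreal_toReal).aestronglyMeasurable.norm)
    (integrable_const _) (fun n => ae_of_all _ (hbound n)) hlim_toReal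

end

namespace IsBayesInv

variable {X X' : Type*} [MeasurableSpace X] [MeasurableSpace X'] {μ : Measure X}
  {p : X → X'} {g : X' → Measure X}

theorem bind_restrict_map (hg : IsBayesInv μ (fun x => Measure.dirac (p x)) g)
    (hp : Measurable p) {B : Set X'} (hB : MeasurableSet B) :
    ((μ.map p).restrict B).bind g = μ.restrict (p ⁻¹' B) := by
  ext S hS
  have hbayes := hg.2.2.2 S B hS hB
  rw [Measure.bind_dirac_eq_map μ hp] at hbayes
  have hdirac : ∀ x, Measure.dirac (p x) B = (p ⁻¹' B).indicator 1 x := fun x =>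
    Measure.dirac_apply' _ hB
  rw [Measure.bind_apply hS hg.1.aemeasurable, Measure.restrict_apply hS, ← hbayes]
  simp_rw [hdirac]
  simp [lintegral_indicator (hp hB), Measure.restrict_restrict (hp hB), Set.inter_comm]

theorem setLIntegral_preimage_lintegral (hg : IsBayesInv μ (fun x => Measure.dirac (p x)) g)
    (hp : Measurable p) {h : X → ℝ≥0∞} (hh : Measurable h) {B : Set X'}
    (hB : MeasurableSet B) :
    ∫⁻ x in p ⁻¹' B, ∫⁻ z, h z ∂(g (p x)) ∂μ = ∫⁻ x in p ⁻¹' B, h x ∂μ := by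
  calc ∫⁻ x in p ⁻¹' B, ∫⁻ z, h z ∂(g (p x)) ∂μ
      = ∫⁻ y in B, ∫⁻ z, h z ∂(g y) ∂(μ.map p) :=
        (setLIntegral_map hB ((Measure.measurable_lintegral hh).comp hg.1) hp).symm
    _ = ∫⁻ z, h z ∂(((μ.map p).restrict B).bind g) :=
        (Measure.lintegral_bind hg.1.aemeasurable hh.aemeasurable).symm
    _ = ∫⁻ x in p ⁻¹' B, h x ∂μ := by rw [hg.bind_restrict_map hp hB]

theorem lintegral_le_of_le (hg : IsBayesInv μ (fun x => Measure.dirac (p x)) g)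
    {h : X → ℝ≥0∞} {C : ℝ≥0∞} (hhC : ∀ x, h x ≤ C) (y : X') : ∫⁻ z, h z ∂(g y) ≤ C :=
  have := hg.2.1 y
  lintegral_le_const (ae_of_all _ hhC)

theorem condExp_comap_ae_eq [IsFiniteMeasure μ]
    (hg : IsBayesInv μ (fun x => Measure.dirac (p x)) g) (hp : Measurable p)
    {h : X → ℝ≥0∞} (hh : Measurable h) {C : ℝ≥0∞} (hC : C ≠ ∞) (hhC : ∀ x, h x ≤ C) :
    μ[fun x => (h x).toReal | MeasurableSpace.comap p inferInstance]
      =ᵐ[μ] fun x => (∫⁻ z, h z ∂(g (p x))).toReal := by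
  have hH : Measurable fun y => ∫⁻ z, h z ∂(g y) := (Measure.measurable_lintegral hh).comp hg.1
  have hHC : ∀ x, ∫⁻ z, h z ∂(g (p x)) ≤ C := fun x => hg.lintegral_le_of_le hhC (p x)
  refine (ae_eq_condExp_of_forall_setIntegral_eq hp.comap_le
    (integrable_toReal_of_le hh.aemeasurable hC hhC)
    (fun s _ _ => (integrable_toReal_of_le (hH.comp hp).aemeasurable hC hHC).integrableOn)
    ?_ ?_).symm
  · rintro _ ⟨B, hB, rfl⟩ -
    rw [integral_toReal (hH.comp hp).aemeasurable
        (ae_of_all _ fun x => (hHC x).trans_lt hC.lt_top),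
      integral_toReal hh.aemeasurable (ae_of_all _ fun x => (hhC x).trans_lt hC.lt_top),
      ← hg.setLIntegral_preimage_lintegral hp hh hB]
    rfl
  · exact (hH.ennreal_toReal.comp (comap_measurable p)).aestronglyMeasurable

end IsBayesInv

theorem tendsto_ae_lintegral_of_isBayesInv_dirac {X : Type*} [MeasurableSpace X]
    {μ : Measure X} [IsFiniteMeasure μ] {X' : ℕ → Type*} [∀ n, MeasurableSpace (X' n)]
    {p : ∀ n, X → X' n} (hp : ∀ n, Measurable (p n))
    (hmono : Monotone fun n => MeasurableSpace.comap (p n) inferInstance)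
    (hgen : ⨆ n, MeasurableSpace.comap (p n) inferInstance = (inferInstance : MeasurableSpace X))
    {pd : ∀ n, X' n → Measure X} (hpd : ∀ n, IsBayesInv μ (fun x => Measure.dirac (p n x)) (pd n))
    {h : X → ℝ≥0∞} (hh : Measurable h) {C : ℝ≥0∞} (hC : C ≠ ∞) (hhC : ∀ x, h x ≤ C) :
    ∀ᵐ x ∂μ, Tendsto (fun n => ∫⁻ z, h z ∂(pd n (p n x))) atTop (𝓝 (h x)) := by
  filter_upwards [tendsto_ae_condExp_of_iSup_eq hmono hgen
      (integrable_toReal_of_le hh.aemeasurable hC hhC) hh.ennreal_toReal.stronglyMeasurable,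
    ae_all_iff.2 fun n => (hpd n).condExp_comap_ae_eq (hp n) hh hC hhC] with x hx hxn
  exact (ENNReal.tendsto_toReal_iff
    (fun n => ne_top_of_le_ne_top hC ((hpd n).lintegral_le_of_le hhC (p n x)))
    (ne_top_of_le_ne_top hC (hhC x))).1 (hx.congr hxn)

theorem levy_kernel_approximation_general
    {X : Type*} [MeasurableSpace X]
    {Y : Type*} [MeasurableSpace Y]
    (μ : Measure X) [IsProbabilityMeasure μ]
    (f : X → Measure Y) (hf : Measurable f) (hfP : ∀ x, IsProbabilityMeasure (f x))
    (X' : ℕ → Type*) [∀ n, MeasurableSpace (X' n)]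
    (p : ∀ n, X → X' n) (hp : ∀ n, Measurable (p n))
    (hmono : Monotone fun n => MeasurableSpace.comap (p n) inferInstance)
    (hgen : (⨆ n, MeasurableSpace.comap (p n) inferInstance)
        = (inferInstance : MeasurableSpace X))
    (pd : ∀ n, X' n → Measure X)
    (hpd : ∀ n, IsBayesInv μ (fun x => Measure.dirac (p n x)) (pd n)) :
    ∀ A : Set Y, MeasurableSet A →
      (∀ᵐ x ∂μ, Tendsto
          (fun n => (((Measure.dirac (p n x)).bind (pd n)).bind f) A)
          atTop (𝓝 (f x A))) ∧
      Tendsto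
        (fun n => ∫ x,
            |((((Measure.dirac (p n x)).bind (pd n)).bind f) A).toReal
              - (f x A).toReal| ∂μ)
        atTop (𝓝 0) := by
  intro A hA
  have hfA : Measurable fun x => f x A := (Measure.measurable_coe hA).comp hf
  have hfA_le : ∀ x, f x A ≤ 1 := fun x => prob_le_one
  have happrox : ∀ n x, (((Measure.dirac (p n x)).bind (pd n)).bind f) A
      = ∫⁻ z, f z A ∂(pd n (p n x)) := fun n x => by
    rw [Measure.dirac_bind (hpd n).1, Measure.bind_apply hA hf.aemeasurable]
  have hlim := tendsto_ae_lintegral_of_isBayesInv_dirac hp hmono hgen hpd hfA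
    ENNReal.one_ne_top hfA_le
  simp only [happrox]
  exact ⟨hlim, tendsto_integral_abs_toReal_sub_of_tendsto_ae ENNReal.one_ne_top
    (fun n => (((Measure.measurable_lintegral hfA).comp (hpd n).1).comp (hp n)).aemeasurable)
    hfA.aemeasurable (fun n x => (hpd n).lintegral_le_of_le hfA_le (p n x)) hfA_le hlim⟩

/-- Lévy lemma for kernel approximations: for a filtration generated by a
discretization scheme that generates the Borel σ-algebra, the approximations
`fⁿ = f ∘ pₙ† ∘ δ_{pₙ}` converge to `f` pointwise a.e. and in `L¹` on each
measurable set. -/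
theorem levy_kernel_approximation
    {X : Type*} [MeasurableSpace X] [StandardBorelSpace X] [Nonempty X]
    {Y : Type*} [MeasurableSpace Y]
    (μ : Measure X) [IsProbabilityMeasure μ]
    (f : X → Measure Y) (hf : Measurable f) (hfP : ∀ x, IsProbabilityMeasure (f x))
    (X' : ℕ → Type*) [∀ n, Fintype (X' n)] [∀ n, MeasurableSpace (X' n)]
    [∀ n, DiscreteMeasurableSpace (X' n)]
    (p : ∀ n, X → X' n) (hp : ∀ n, Measurable (p n))
    (hmono : Monotone fun n => MeasurableSpace.comap (p n) inferInstance)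
    (hgen : (⨆ n, MeasurableSpace.comap (p n) inferInstance)
        = (inferInstance : MeasurableSpace X))
    (pd : ∀ n, X' n → Measure X)
    (hpd : ∀ n, IsBayesInv μ (fun x => Measure.dirac (p n x)) (pd n)) :
    ∀ A : Set Y, MeasurableSet A →
      (∀ᵐ x ∂μ, Tendsto
          (fun n => (((Measure.dirac (p n x)).bind (pd n)).bind f) A)
          atTop (𝓝 (f x A))) ∧
      Tendsto
        (fun n => ∫ x,
            |((((Measure.dirac (p n x)).bind (pd n)).bind f) A).toReal
              - (f x A).toReal| ∂μ)
        atTop (𝓝 0) :=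
  levy_kernel_approximation_general μ f hf hfP X' p hp hmono hgen pd hpd
end

section
/- (The monoidal structure is SOT-continuous) Let X₁, Y₁, X₂, Y₂ be nonempty standard Borel spaces, μᵢ probability measures on Xᵢ, and let fⁿ, f : X₁ ⇸ Y₁ and gⁿ, g : X₂ ⇸ Y₂ be Markov kernels with μ₁.bind fⁿ = μ₁.bind f = ν₁ and μ₂.bind gⁿ = μ₂.bind g = ν₂ for all n. If fⁿ converges to f in the strong operator topology (relative to μ₁, ν₁) and gⁿ converges to g in the strong operator topology (relative to μ₂, ν₂), then the product kernels fⁿ ⊗ gⁿ : X₁ × X₂ ⇸ Y₁ × Y₂, (x₁,x₂) ↦ (fⁿ x₁) ⊗ (gⁿ x₂), converge to f ⊗ g in the strong operator topology relative to μ₁ ⊗ μ₂ and ν₁ ⊗ ν₂. -/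
/-!
Write `‖(κ - η) φ‖` for `∫ |∫ φ d(κ x) - ∫ φ d(η x)| dμ(x)`. When `κ` and `η` both push `μ` forward
to `ν`, this is at most `2 ‖φ‖_{L¹(ν)}`, so the functions `φ` along which `κₙ → κ` form a closed
subspace of `L¹(ν)`: it suffices to test indicators of measurable sets, and the sets that pass form
a Dynkin system (complements because the kernels are Markov, countable disjoint unions because the
tails have small `ν`-measure). For product kernels it is thus enough to test rectangles `s × t`,
where `|a b - a' b'| ≤ |a - a'| + |b - b'|` for `b, a' ∈ [0, 1]` bounds the deviation of the product
by the deviations of the two factors.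
-/

open MeasureTheory Filter Topology

/-- Convergence of a sequence of Markov kernels to a kernel in the strong
operator topology (relative to measures `μ` on the domain and `ν` on the
codomain). -/
def TendstoSOT {X Y : Type*} [MeasurableSpace X] [MeasurableSpace Y]
    (fs : ℕ → X → Measure Y) (f : X → Measure Y)
    (μ : Measure X) (ν : Measure Y) : Prop :=
  ∀ φ : Y → ℝ, Measurable φ → Integrable φ ν →
    Tendsto (fun n => ∫ x, |(∫ y, φ y ∂(fs n x)) - (∫ y, φ y ∂(f x))| ∂μ)
      atTop (𝓝 0)

open ProbabilityTheory
open scoped ENNReal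

lemma ENNReal.tendsto_nhds_zero_of_forall_le_add {ι : Type*} {l : Filter ι} {u : ι → ℝ≥0∞}
    (h : ∀ ε > 0, ∃ v : ι → ℝ≥0∞, Tendsto v l (𝓝 0) ∧ ∀ i, u i ≤ v i + ε) :
    Tendsto u l (𝓝 0) := by
  refine ENNReal.tendsto_nhds_zero.2 fun ε hε ↦ ?_
  obtain ⟨v, hv, huv⟩ := h (ε / 2) (ENNReal.half_pos hε.ne')
  filter_upwards [ENNReal.tendsto_nhds_zero.1 hv (ε / 2) (ENNReal.half_pos hε.ne')] with i hi
  calc u i ≤ v i + ε / 2 := huv i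
    _ ≤ ε / 2 + ε / 2 := by gcongr
    _ = ε := ENNReal.add_halves ε

lemma Real.enorm_mul_sub_mul_le {a b c d : ℝ} (hb : ‖b‖ₑ ≤ 1) (hc : ‖c‖ₑ ≤ 1) :
    ‖a * b - c * d‖ₑ ≤ ‖a - c‖ₑ + ‖b - d‖ₑ :=
  calc ‖a * b - c * d‖ₑ = ‖(a - c) * b + c * (b - d)‖ₑ := by ring_nf
    _ ≤ ‖a - c‖ₑ * ‖b‖ₑ + ‖c‖ₑ * ‖b - d‖ₑ := by
      grw [enorm_add_le, enorm_mul, enorm_mul]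
    _ ≤ ‖a - c‖ₑ * 1 + 1 * ‖b - d‖ₑ := by gcongr
    _ = ‖a - c‖ₑ + ‖b - d‖ₑ := by rw [mul_one, one_mul]

lemma MeasureTheory.enorm_measureReal_le_one {Y : Type*} [MeasurableSpace Y] (ρ : Measure Y)
    [IsProbabilityMeasure ρ] (t : Set Y) : ‖ρ.real t‖ₑ ≤ 1 := by
  rw [Real.enorm_of_nonneg measureReal_nonneg, ofReal_measureReal]
  exact prob_le_one

lemma MeasureTheory.Measure.parallelComp_comp_prod_s18 {X₁ X₂ Y₁ Y₂ : Type*}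
    [MeasurableSpace X₁] [MeasurableSpace X₂] [MeasurableSpace Y₁] [MeasurableSpace Y₂]
    {μ₁ : Measure X₁} {μ₂ : Measure X₂} [SFinite μ₁] [SFinite μ₂]
    {κ : Kernel X₁ Y₁} {η : Kernel X₂ Y₂} [IsSFiniteKernel κ] [IsSFiniteKernel η] :
    (κ ∥ₖ η) ∘ₘ (μ₁.prod μ₂) = (κ ∘ₘ μ₁).prod (η ∘ₘ μ₂) := by
  rw [Measure.prod_comp_left, Measure.prod_comp_right, Measure.comp_assoc,
    Kernel.parallelComp_comp_parallelComp, Kernel.comp_id, Kernel.id_comp]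

lemma MeasureTheory.lintegral_fun_fst {α β : Type*} [MeasurableSpace α] [MeasurableSpace β]
    {μ : Measure α} {ν : Measure β} [SFinite ν] {f : α → ℝ≥0∞} (hf : AEMeasurable f μ) :
    ∫⁻ z, f z.1 ∂μ.prod ν = ν Set.univ * ∫⁻ x, f x ∂μ := by
  simpa [mul_comm] using lintegral_prod_mul (ν := ν) hf (aemeasurable_const (b := 1))

lemma MeasureTheory.lintegral_fun_snd {α β : Type*} [MeasurableSpace α] [MeasurableSpace β]
    {μ : Measure α} {ν : Measure β} [SFinite ν] {f : β → ℝ≥0∞} (hf : AEMeasurable f ν) :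
    ∫⁻ z, f z.2 ∂μ.prod ν = μ Set.univ * ∫⁻ y, f y ∂ν := by
  simpa using lintegral_prod_mul (μ := μ) (aemeasurable_const (b := 1)) hf

lemma MeasureTheory.AEStronglyMeasurable.integral_kernel_of_comp {X Y : Type*}
    [MeasurableSpace X] [MeasurableSpace Y] {μ : Measure X} {κ : Kernel X Y} {φ : Y → ℝ}
    (hφ : AEStronglyMeasurable φ (κ ∘ₘ μ)) :
    AEStronglyMeasurable (fun x ↦ ∫ y, φ y ∂κ x) μ :=
  ⟨fun x ↦ ∫ y, hφ.mk φ y ∂κ x, hφ.stronglyMeasurable_mk.integral_kernel, by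
    filter_upwards [Measure.ae_ae_of_ae_comp hφ.ae_eq_mk] with x hx using integral_congr_ae hx⟩

namespace ProbabilityTheory.Kernel

variable {X Y : Type*} [MeasurableSpace X] [MeasurableSpace Y]
  {μ : Measure X} {ν : Measure Y} {κ η : Kernel X Y} {φ ψ : Y → ℝ}

lemma lintegral_enorm_integral_le (hφ : AEStronglyMeasurable φ (κ ∘ₘ μ)) :
    ∫⁻ x, ‖∫ y, φ y ∂κ x‖ₑ ∂μ ≤ eLpNorm φ 1 (κ ∘ₘ μ) := by
  rw [eLpNorm_one_eq_lintegral_enorm, Measure.lintegral_bind κ.aemeasurable hφ.enorm]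
  exact lintegral_mono fun x ↦ enorm_integral_le_lintegral_enorm _

/-- The seminorm `‖(κ - η) φ‖_{L¹(μ)}`; these seminorms define the strong operator topology. -/
noncomputable def sotDist (μ : Measure X) (κ η : Kernel X Y) (φ : Y → ℝ) : ℝ≥0∞ :=
  ∫⁻ x, ‖∫ y, φ y ∂κ x - ∫ y, φ y ∂η x‖ₑ ∂μ

lemma sotDist_congr_ae (hκ : κ ∘ₘ μ = ν) (hη : η ∘ₘ μ = ν) (h : φ =ᵐ[ν] ψ) :
    sotDist μ κ η φ = sotDist μ κ η ψ := by
  subst hκ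
  refine lintegral_congr_ae ?_
  filter_upwards [Measure.ae_ae_of_ae_comp h, Measure.ae_ae_of_ae_comp (hη ▸ h)] with x hκx hηx
  rw [integral_congr_ae hκx, integral_congr_ae hηx]

lemma sotDist_le (hκ : κ ∘ₘ μ = ν) (hη : η ∘ₘ μ = ν) (hφ : AEStronglyMeasurable φ ν) :
    sotDist μ κ η φ ≤ 2 * eLpNorm φ 1 ν := by
  subst hκ
  calc sotDist μ κ η φ ≤ ∫⁻ x, ‖∫ y, φ y ∂κ x‖ₑ + ‖∫ y, φ y ∂η x‖ₑ ∂μ :=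
        lintegral_mono fun x ↦ enorm_sub_le
    _ = ∫⁻ x, ‖∫ y, φ y ∂κ x‖ₑ ∂μ + ∫⁻ x, ‖∫ y, φ y ∂η x‖ₑ ∂μ :=
        lintegral_add_left' hφ.integral_kernel_of_comp.enorm _
    _ ≤ eLpNorm φ 1 (κ ∘ₘ μ) + eLpNorm φ 1 (κ ∘ₘ μ) := by
        grw [lintegral_enorm_integral_le hφ, lintegral_enorm_integral_le (hη ▸ hφ), hη]
    _ = 2 * eLpNorm φ 1 (κ ∘ₘ μ) := (two_mul _).symm

lemma sotDist_add_le (hκ : κ ∘ₘ μ = ν) (hη : η ∘ₘ μ = ν) (hφ : Integrable φ ν)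
    (hψ : Integrable ψ ν) :
    sotDist μ κ η (φ + ψ) ≤ sotDist μ κ η φ + sotDist μ κ η ψ := by
  subst hκ
  have hφη : Integrable φ (η ∘ₘ μ) := hη ▸ hφ
  have hψη : Integrable ψ (η ∘ₘ μ) := hη ▸ hψ
  refine (lintegral_mono_ae ?_).trans_eq (lintegral_add_left'
    (hφ.1.integral_kernel_of_comp.sub hφη.1.integral_kernel_of_comp).enorm _)
  filter_upwards [Measure.ae_integrable_of_integrable_comp hφ,
    Measure.ae_integrable_of_integrable_comp hψ, Measure.ae_integrable_of_integrable_comp hφη,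
    Measure.ae_integrable_of_integrable_comp hψη] with x hφκ hψκ hφη hψη
  rw [Pi.add_def, integral_add hφκ hψκ, integral_add hφη hψη, add_sub_add_comm]
  exact enorm_add_le _ _

lemma sotDist_smul (c : ℝ) : sotDist μ κ η (c • φ) = ‖c‖ₑ * sotDist μ κ η φ := by
  simp only [sotDist, Pi.smul_apply, integral_smul, ← smul_sub, enorm_smul]
  exact lintegral_const_mul' _ _ enorm_ne_top

lemma sotDist_indicator_one {t : Set Y} (ht : MeasurableSet t) :
    sotDist μ κ η (t.indicator 1) = ∫⁻ x, ‖(κ x).real t - (η x).real t‖ₑ ∂μ := by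
  simp only [sotDist, integral_indicator_one ht]

lemma sotDist_indicator_compl [IsMarkovKernel κ] [IsMarkovKernel η] {t : Set Y}
    (ht : MeasurableSet t) :
    sotDist μ κ η (tᶜ.indicator 1) = sotDist μ κ η (t.indicator 1) := by
  simp only [sotDist_indicator_one ht, sotDist_indicator_one ht.compl,
    probReal_compl_eq_one_sub ht, sub_sub_sub_cancel_left, enorm_sub_rev]

lemma sotDist_finset_sum_le {ι : Type*} (hκ : κ ∘ₘ μ = ν) (hη : η ∘ₘ μ = ν) (s : Finset ι)
    {φ : ι → Y → ℝ} (hφ : ∀ i ∈ s, Integrable (φ i) ν) :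
    sotDist μ κ η (∑ i ∈ s, φ i) ≤ ∑ i ∈ s, sotDist μ κ η (φ i) := by
  classical
  induction s using Finset.induction_on with
  | empty => simp [sotDist]
  | insert i s hi ih =>
    rw [Finset.sum_insert hi, Finset.sum_insert hi]
    refine (sotDist_add_le hκ hη (hφ i (s.mem_insert_self i))
      (integrable_finsetSum' s fun j hj ↦ hφ j (Finset.mem_insert_of_mem hj))).trans ?_
    gcongr
    exact ih fun j hj ↦ hφ j (Finset.mem_insert_of_mem hj)

variable {κs : ℕ → Kernel X Y}

lemma tendsto_sotDist_of_approx (hκs : ∀ n, κs n ∘ₘ μ = ν) (hκ : κ ∘ₘ μ = ν)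
    (hφ : Integrable φ ν)
    (h : ∀ ε > 0, ∃ ψ, Integrable ψ ν ∧ eLpNorm (φ - ψ) 1 ν < ε ∧
      Tendsto (fun n ↦ sotDist μ (κs n) κ ψ) atTop (𝓝 0)) :
    Tendsto (fun n ↦ sotDist μ (κs n) κ φ) atTop (𝓝 0) := by
  refine ENNReal.tendsto_nhds_zero_of_forall_le_add fun ε hε ↦ ?_
  obtain ⟨ψ, hψ, hφψ, hψlim⟩ := h (ε / 2) (ENNReal.half_pos hε.ne')
  refine ⟨_, hψlim, fun n ↦ ?_⟩
  calc sotDist μ (κs n) κ φ = sotDist μ (κs n) κ (ψ + (φ - ψ)) := by rw [add_sub_cancel]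
    _ ≤ sotDist μ (κs n) κ ψ + sotDist μ (κs n) κ (φ - ψ) :=
        sotDist_add_le (hκs n) hκ hψ (hφ.sub hψ)
    _ ≤ sotDist μ (κs n) κ ψ + 2 * (ε / 2) := by
        grw [sotDist_le (hκs n) hκ (hφ.sub hψ).1, hφψ]
    _ = sotDist μ (κs n) κ ψ + ε := by
        rw [ENNReal.mul_div_cancel two_ne_zero ENNReal.ofNat_ne_top]

lemma tendsto_sotDist_indicator_iUnion [IsFiniteMeasure ν] (hκs : ∀ n, κs n ∘ₘ μ = ν)
    (hκ : κ ∘ₘ μ = ν) {s : ℕ → Set Y} (hs : ∀ i, MeasurableSet (s i))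
    (hdisj : Pairwise (Function.onFun Disjoint s))
    (h : ∀ i, Tendsto (fun n ↦ sotDist μ (κs n) κ ((s i).indicator 1)) atTop (𝓝 0)) :
    Tendsto (fun n ↦ sotDist μ (κs n) κ ((⋃ i, s i).indicator 1)) atTop (𝓝 0) := by
  refine tendsto_sotDist_of_approx hκs hκ ((integrable_const 1).indicator (.iUnion hs))
    fun ε hε ↦ ?_
  obtain ⟨N, hN⟩ := ((tendsto_order.1 (tendsto_measure_biUnion_Ici_zero_of_pairwise_disjoint
    (μ := ν) (fun i ↦ (hs i).nullMeasurableSet) hdisj)).2 ε hε).exists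
  have hsN : MeasurableSet (⋃ i ∈ Finset.range N, s i) :=
    Finset.measurableSet_biUnion _ fun i _ ↦ hs i
  refine ⟨(⋃ i ∈ Finset.range N, s i).indicator 1, (integrable_const 1).indicator hsN, ?_, ?_⟩
  · calc eLpNorm ((⋃ i, s i).indicator 1 - (⋃ i ∈ Finset.range N, s i).indicator 1) 1 ν
        = ν ((⋃ i, s i) \ ⋃ i ∈ Finset.range N, s i) := by
          rw [eLpNorm_indicator_sub_indicator, symmDiff_of_ge (Set.iUnion₂_subset_iUnion _ _),
            Pi.one_def, eLpNorm_indicator_const ((MeasurableSet.iUnion hs).diff hsN) one_ne_zero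
            ENNReal.one_ne_top]
          simp
      _ ≤ ν (⋃ i ≥ N, s i) := measure_mono fun y ↦ by
          simp only [Set.mem_sdiff, Set.mem_iUnion, Finset.mem_range]
          grind
      _ < ε := hN
  · rw [Finset.indicator_biUnion _ _ fun i _ j _ hij ↦ hdisj hij, ← Finset.sum_fn]
    refine tendsto_of_tendsto_of_tendsto_of_le_of_le tendsto_const_nhds ?_ (fun n ↦ zero_le)
      fun n ↦ sotDist_finset_sum_le (hκs n) hκ _ fun i _ ↦ (integrable_const 1).indicator (hs i)
    simpa using tendsto_finsetSum (Finset.range N) fun i _ ↦ h i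

lemma tendsto_sotDist_indicator_of_isPiSystem [IsFiniteMeasure ν] [∀ n, IsMarkovKernel (κs n)]
    [IsMarkovKernel κ] (hκs : ∀ n, κs n ∘ₘ μ = ν) (hκ : κ ∘ₘ μ = ν) {C : Set (Set Y)}
    (hgen : ‹MeasurableSpace Y› = .generateFrom C) (hC : IsPiSystem C)
    (h : ∀ t ∈ C, Tendsto (fun n ↦ sotDist μ (κs n) κ (t.indicator 1)) atTop (𝓝 0))
    {t : Set Y} (ht : MeasurableSet t) :
    Tendsto (fun n ↦ sotDist μ (κs n) κ (t.indicator 1)) atTop (𝓝 0) := by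
  induction t, ht using MeasurableSpace.induction_on_inter hgen hC with
  | empty => simp [sotDist]
  | basic t ht => exact h t ht
  | compl t ht iht => simpa only [sotDist_indicator_compl ht] using iht
  | iUnion s hdisj hs ih => exact tendsto_sotDist_indicator_iUnion hκs hκ hs hdisj ih

theorem tendsto_sotDist_of_forall_measurableSet (hκs : ∀ n, κs n ∘ₘ μ = ν) (hκ : κ ∘ₘ μ = ν)
    (h : ∀ t, MeasurableSet t →
      Tendsto (fun n ↦ sotDist μ (κs n) κ (t.indicator 1)) atTop (𝓝 0))
    (hφ : Integrable φ ν) :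
    Tendsto (fun n ↦ sotDist μ (κs n) κ φ) atTop (𝓝 0) := by
  refine Integrable.induction (fun φ ↦ Tendsto (fun n ↦ sotDist μ (κs n) κ φ) atTop (𝓝 0))
    ?_ ?_ ?_ ?_ hφ
  · intro c s hs _
    have hcs : s.indicator (fun _ ↦ c) = c • s.indicator 1 := by
      ext y; by_cases hy : y ∈ s <;> simp [hy]
    simpa [hcs, sotDist_smul] using ENNReal.Tendsto.const_mul (h s hs) (.inr enorm_ne_top)
  · intro φ ψ _ hφ hψ hφlim hψlim
    refine tendsto_of_tendsto_of_tendsto_of_le_of_le tendsto_const_nhds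
      (by simpa using hφlim.add hψlim) (fun n ↦ zero_le) fun n ↦ sotDist_add_le (hκs n) hκ hφ hψ
  · refine isClosed_of_closure_subset fun F hF ↦ ?_
    refine tendsto_sotDist_of_approx hκs hκ (L1.integrable_coeFn F) fun ε hε ↦ ?_
    obtain ⟨G, hG, hFG⟩ := EMetric.mem_closure_iff.1 hF ε hε
    exact ⟨G, L1.integrable_coeFn G, by rwa [← Lp.edist_def], hG⟩
  · intro φ ψ hφψ _ hφlim
    simpa only [sotDist_congr_ae (hκs _) hκ hφψ] using hφlim

lemma tendstoSOT_iff_forall_tendsto_sotDist (hκs : ∀ n, κs n ∘ₘ μ = ν) (hκ : κ ∘ₘ μ = ν) :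
    TendstoSOT (fun n ↦ κs n) κ μ ν ↔ ∀ φ, Measurable φ → Integrable φ ν →
      Tendsto (fun n ↦ sotDist μ (κs n) κ φ) atTop (𝓝 0) := by
  refine forall₃_congr fun φ hφ hφi ↦ ?_
  have hfin n : sotDist μ (κs n) κ φ ≠ ⊤ := ((sotDist_le (hκs n) hκ hφi.1).trans_lt
    (ENNReal.mul_lt_top (by simp) (memLp_one_iff_integrable.2 hφi).eLpNorm_lt_top)).ne
  rw [← ENNReal.tendsto_toReal_zero_iff hfin]
  congr! with n
  simp only [← Real.norm_eq_abs]
  exact integral_norm_eq_lintegral_enorm (hφ.stronglyMeasurable.integral_kernel.sub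
    hφ.stronglyMeasurable.integral_kernel).aestronglyMeasurable

variable {X₁ X₂ Y₁ Y₂ : Type*} [MeasurableSpace X₁] [MeasurableSpace X₂]
  [MeasurableSpace Y₁] [MeasurableSpace Y₂] {μ₁ : Measure X₁} {μ₂ : Measure X₂}
  [IsProbabilityMeasure μ₁] [IsProbabilityMeasure μ₂]

lemma sotDist_parallelComp_indicator_prod_le {κ κ' : Kernel X₁ Y₁} {η η' : Kernel X₂ Y₂}
    [IsSFiniteKernel κ] [IsMarkovKernel κ'] [IsMarkovKernel η] [IsSFiniteKernel η']
    {s : Set Y₁} {t : Set Y₂} (hs : MeasurableSet s) (ht : MeasurableSet t) :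
    sotDist (μ₁.prod μ₂) (κ ∥ₖ η) (κ' ∥ₖ η') ((s ×ˢ t).indicator 1)
      ≤ sotDist μ₁ κ κ' (s.indicator 1) + sotDist μ₂ η η' (t.indicator 1) := by
  have hκs : Measurable fun x ↦ ‖(κ x).real s - (κ' x).real s‖ₑ :=
    ((κ.measurable_coe hs).ennreal_toReal.sub (κ'.measurable_coe hs).ennreal_toReal).enorm
  have hηt : Measurable fun x ↦ ‖(η x).real t - (η' x).real t‖ₑ :=
    ((η.measurable_coe ht).ennreal_toReal.sub (η'.measurable_coe ht).ennreal_toReal).enorm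
  calc sotDist (μ₁.prod μ₂) (κ ∥ₖ η) (κ' ∥ₖ η') ((s ×ˢ t).indicator 1)
      = ∫⁻ x, ‖(κ x.1).real s * (η x.2).real t - (κ' x.1).real s * (η' x.2).real t‖ₑ
          ∂(μ₁.prod μ₂) := by
        simp only [sotDist_indicator_one (hs.prod ht), parallelComp_apply, measureReal_prod_prod]
    _ ≤ ∫⁻ x, ‖(κ x.1).real s - (κ' x.1).real s‖ₑ + ‖(η x.2).real t - (η' x.2).real t‖ₑ
          ∂(μ₁.prod μ₂) :=
        lintegral_mono fun x ↦ Real.enorm_mul_sub_mul_le (enorm_measureReal_le_one _ _)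
          (enorm_measureReal_le_one _ _)
    _ = sotDist μ₁ κ κ' (s.indicator 1) + sotDist μ₂ η η' (t.indicator 1) := by
        rw [lintegral_add_left (f := fun x : X₁ × X₂ ↦ ‖(κ x.1).real s - (κ' x.1).real s‖ₑ)
          (hκs.comp measurable_fst), lintegral_fun_fst hκs.aemeasurable,
          lintegral_fun_snd hηt.aemeasurable, sotDist_indicator_one hs, sotDist_indicator_one ht,
          measure_univ, measure_univ, one_mul, one_mul]

theorem tendstoSOT_parallelComp {κs : ℕ → Kernel X₁ Y₁} {κ : Kernel X₁ Y₁}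
    {ηs : ℕ → Kernel X₂ Y₂} {η : Kernel X₂ Y₂} [∀ n, IsMarkovKernel (κs n)] [IsMarkovKernel κ]
    [∀ n, IsMarkovKernel (ηs n)] [IsMarkovKernel η]
    (hκs : ∀ n, κs n ∘ₘ μ₁ = κ ∘ₘ μ₁) (hηs : ∀ n, ηs n ∘ₘ μ₂ = η ∘ₘ μ₂)
    (hκ : TendstoSOT (fun n ↦ κs n) κ μ₁ (κ ∘ₘ μ₁))
    (hη : TendstoSOT (fun n ↦ ηs n) η μ₂ (η ∘ₘ μ₂)) :
    TendstoSOT (fun n ↦ κs n ∥ₖ ηs n) (κ ∥ₖ η) (μ₁.prod μ₂) ((κ ∘ₘ μ₁).prod (η ∘ₘ μ₂)) := by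
  have hprod n : (κs n ∥ₖ ηs n) ∘ₘ (μ₁.prod μ₂) = (κ ∘ₘ μ₁).prod (η ∘ₘ μ₂) := by
    rw [Measure.parallelComp_comp_prod_s18, hκs, hηs]
  rw [tendstoSOT_iff_forall_tendsto_sotDist hκs rfl] at hκ
  rw [tendstoSOT_iff_forall_tendsto_sotDist hηs rfl] at hη
  rw [tendstoSOT_iff_forall_tendsto_sotDist hprod Measure.parallelComp_comp_prod_s18]
  refine fun φ _ hφ ↦ tendsto_sotDist_of_forall_measurableSet hprod
    Measure.parallelComp_comp_prod_s18 (fun u hu ↦ ?_) hφ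
  refine tendsto_sotDist_indicator_of_isPiSystem hprod Measure.parallelComp_comp_prod_s18
    generateFrom_prod.symm isPiSystem_prod ?_ hu
  rintro _ ⟨s, hs, t, ht, rfl⟩
  have hs' := hκ (s.indicator 1) (measurable_const.indicator hs)
    ((integrable_const 1).indicator hs)
  have ht' := hη (t.indicator 1) (measurable_const.indicator ht)
    ((integrable_const 1).indicator ht)
  exact tendsto_of_tendsto_of_tendsto_of_le_of_le tendsto_const_nhds
    (by simpa using hs'.add ht') (fun n ↦ zero_le)
    fun n ↦ sotDist_parallelComp_indicator_prod_le hs ht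

end ProbabilityTheory.Kernel

theorem prod_kernel_tendstoSOT_general
    {X₁ Y₁ X₂ Y₂ : Type*}
    [MeasurableSpace X₁]
    [MeasurableSpace Y₁]
    [MeasurableSpace X₂]
    [MeasurableSpace Y₂]
    (μ₁ : Measure X₁) [IsProbabilityMeasure μ₁]
    (μ₂ : Measure X₂) [IsProbabilityMeasure μ₂]
    (fs : ℕ → X₁ → Measure Y₁) (f : X₁ → Measure Y₁)
    (hfs : ∀ n, Measurable (fs n)) (hf : Measurable f)
    (hfsP : ∀ n x, IsProbabilityMeasure (fs n x))
    (hfP : ∀ x, IsProbabilityMeasure (f x))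
    (gs : ℕ → X₂ → Measure Y₂) (g : X₂ → Measure Y₂)
    (hgs : ∀ n, Measurable (gs n)) (hg : Measurable g)
    (hgsP : ∀ n x, IsProbabilityMeasure (gs n x))
    (hgP : ∀ x, IsProbabilityMeasure (g x))
    (hfsbind : ∀ n, μ₁.bind (fs n) = μ₁.bind f)
    (hgsbind : ∀ n, μ₂.bind (gs n) = μ₂.bind g)
    (hfSOT : TendstoSOT fs f μ₁ (μ₁.bind f))
    (hgSOT : TendstoSOT gs g μ₂ (μ₂.bind g)) :
    TendstoSOT
      (fun n (x : X₁ × X₂) => ((fs n x.1).prod (gs n x.2)))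
      (fun x : X₁ × X₂ => (f x.1).prod (g x.2))
      (μ₁.prod μ₂) ((μ₁.bind f).prod (μ₂.bind g)) := by
  let κs n : Kernel X₁ Y₁ := ⟨fs n, hfs n⟩
  let κ : Kernel X₁ Y₁ := ⟨f, hf⟩
  let ηs n : Kernel X₂ Y₂ := ⟨gs n, hgs n⟩
  let η : Kernel X₂ Y₂ := ⟨g, hg⟩
  have hκs n : IsMarkovKernel (κs n) := ⟨hfsP n⟩
  have hκ : IsMarkovKernel κ := ⟨hfP⟩
  have hηs n : IsMarkovKernel (ηs n) := ⟨hgsP n⟩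
  have hη : IsMarkovKernel η := ⟨hgP⟩
  have hprod : (fun n ↦ ⇑(κs n ∥ₖ ηs n)) = fun n x ↦ (fs n x.1).prod (gs n x.2) :=
    funext fun n ↦ funext (Kernel.parallelComp_apply (κs n) (ηs n))
  have hlim : ⇑(κ ∥ₖ η) = fun x ↦ (f x.1).prod (g x.2) := funext (Kernel.parallelComp_apply κ η)
  rw [← hprod, ← hlim]
  exact Kernel.tendstoSOT_parallelComp (κ := κ) (η := η) hfsbind hgsbind hfSOT hgSOT

/-- The monoidal (product) structure on Markov kernels is continuous for the
strong operator topology. -/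
theorem prod_kernel_tendstoSOT
    {X₁ Y₁ X₂ Y₂ : Type*}
    [MeasurableSpace X₁] [StandardBorelSpace X₁] [Nonempty X₁]
    [MeasurableSpace Y₁] [StandardBorelSpace Y₁] [Nonempty Y₁]
    [MeasurableSpace X₂] [StandardBorelSpace X₂] [Nonempty X₂]
    [MeasurableSpace Y₂] [StandardBorelSpace Y₂] [Nonempty Y₂]
    (μ₁ : Measure X₁) [IsProbabilityMeasure μ₁]
    (μ₂ : Measure X₂) [IsProbabilityMeasure μ₂]
    (fs : ℕ → X₁ → Measure Y₁) (f : X₁ → Measure Y₁)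
    (hfs : ∀ n, Measurable (fs n)) (hf : Measurable f)
    (hfsP : ∀ n x, IsProbabilityMeasure (fs n x))
    (hfP : ∀ x, IsProbabilityMeasure (f x))
    (gs : ℕ → X₂ → Measure Y₂) (g : X₂ → Measure Y₂)
    (hgs : ∀ n, Measurable (gs n)) (hg : Measurable g)
    (hgsP : ∀ n x, IsProbabilityMeasure (gs n x))
    (hgP : ∀ x, IsProbabilityMeasure (g x))
    (hfsbind : ∀ n, μ₁.bind (fs n) = μ₁.bind f)
    (hgsbind : ∀ n, μ₂.bind (gs n) = μ₂.bind g)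
    (hfSOT : TendstoSOT fs f μ₁ (μ₁.bind f))
    (hgSOT : TendstoSOT gs g μ₂ (μ₂.bind g)) :
    TendstoSOT
      (fun n (x : X₁ × X₂) => ((fs n x.1).prod (gs n x.2)))
      (fun x : X₁ × X₂ => (f x.1).prod (g x.2))
      (μ₁.prod μ₂) ((μ₁.bind f).prod (μ₂.bind g)) :=
  prod_kernel_tendstoSOT_general μ₁ μ₂ fs f hfs hf hfsP hfP gs g hgs hg hgsP hgP hfsbind hgsbind
    hfSOT hgSOT
end
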